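/- arXiv:2603.07713 — 10 statements merged into one kernel-verified Lean document; each statement's English description precedes it below -/
import Mathlib

section
/- Let X be a Banach space, g : X → X, and F a semiflow on X such that for every x ∈ X the curve t ↦ F^t(x) solves z' = g(z) with initial value x. Let B ⊆ X be a bounded closed ball that is forward-invariant under F (F^t(B) ⊆ B for all t ≥ 0), and suppose g is Lipschitz on B with constant L, i.e. ‖g(x) − g(y)‖ ≤ L‖x − y‖ for all x, y ∈ B. Let T ≥ 1, ε > 0, and let u : ℝ → X be a locally integrable control with ∫_t^{t+1} ‖u(s)‖ ds < ε·e^{−L} for every t ∈ [0, T−1]. If γ : [0,T] → B satisfies γ(t) = γ(0) + ∫_0^t (g(γ(s)) + u(s)) ds for all t ∈ [0,T], then ‖γ(t+τ) − F^τ(γ(t))‖ < ε for every τ ∈ [0,1] and every t ∈ [0, T−τ]; that is, γ is an ε-chain (shadow chain) for F from γ(0) to γ(T). -/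
open Set Metric Filter

variable {X : Type*} [MetricSpace X]

/-- A (continuous-time) semiflow on a metric space `X`: a continuous map
`[0,∞) × X → X` with `F 0 = id` and `F (t+s) = F t ∘ F s`. -/
structure IsSemiflow (F : ℝ → X → X) : Prop where
  cont : ContinuousOn (fun p : ℝ × X => F p.1 p.2) (Set.Ici 0 ×ˢ Set.univ)
  map_zero : ∀ x : X, F 0 x = x
  map_add : ∀ t s : ℝ, 0 ≤ t → 0 ≤ s → ∀ x : X, F (t + s) x = F t (F s x)

/-- An `(ε,T)`-chain (Conley chain) from `x` to `y`: finitely many points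
`x = c 0, …, c N = y` (with `N ≥ 1`) and times `t i ≥ T` such that
`d(F^{t i}(c i), c (i+1)) < ε`. -/
def ConleyChain (F : ℝ → X → X) (ε T : ℝ) (x y : X) : Prop :=
  ∃ (N : ℕ) (c : ℕ → X) (t : ℕ → ℝ), 1 ≤ N ∧ c 0 = x ∧ c N = y ∧
    ∀ i < N, T ≤ t i ∧ dist (F (t i) (c i)) (c (i + 1)) < ε

/-- `x ≽_C y`: for every `ε > 0` and `T > 0` there is an `(ε,T)`-chain from `x` to `y`. -/
def ConleyLe (F : ℝ → X → X) (x y : X) : Prop :=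
  ∀ ε > (0:ℝ), ∀ T > (0:ℝ), ConleyChain F ε T x y

/-- `γ : [0,T] → X` is piecewise continuous: continuous except at finitely many
points, with one-sided limits at every point. -/
def PiecewiseContinuousOn (γ : ℝ → X) (T : ℝ) : Prop :=
  (∃ S : Finset ℝ, ∀ t ∈ Set.Icc (0:ℝ) T, t ∉ S → ContinuousWithinAt γ (Set.Icc 0 T) t) ∧
  (∀ t ∈ Set.Ioc (0:ℝ) T, ∃ L : X, Filter.Tendsto γ (nhdsWithin t (Set.Iio t)) (nhds L)) ∧
  (∀ t ∈ Set.Ico (0:ℝ) T, ∃ L : X, Filter.Tendsto γ (nhdsWithin t (Set.Ioi t)) (nhds L))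

/-- `γ : [0,T] → X` is `ε`-close to the orbits of `F`:
`d(γ(t+τ), F^τ(γ t)) < ε` for every `τ ∈ [0,1]` and `t ∈ [0, T-τ]`. -/
def EpsCloseTo (F : ℝ → X → X) (ε T : ℝ) (γ : ℝ → X) : Prop :=
  ∀ τ ∈ Set.Icc (0:ℝ) 1, ∀ t ∈ Set.Icc (0:ℝ) (T - τ), dist (γ (t + τ)) (F τ (γ t)) < ε

/-- An `ε`-chain (shadow chain) from `x` to `y`: a piecewise continuous curve
`γ : [0,T] → X`, `T ≥ 1`, with `γ 0 = x`, `γ T = y`, which is `ε`-close to `F`. -/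
def IsShadowChain (F : ℝ → X → X) (ε T : ℝ) (γ : ℝ → X) (x y : X) : Prop :=
  1 ≤ T ∧ PiecewiseContinuousOn γ T ∧ γ 0 = x ∧ γ T = y ∧ EpsCloseTo F ε T γ

/-- `x ≽_S y`: for every `ε > 0` there is an `ε`-chain (shadow chain) from `x` to `y`. -/
def ShadowLe (F : ℝ → X → X) (x y : X) : Prop :=
  ∀ ε > (0:ℝ), ∃ (T : ℝ) (γ : ℝ → X), IsShadowChain F ε T γ x y

/-- Conley chain-recurrent points. -/
def RC (F : ℝ → X → X) : Set X :=
  {x | (∀ t ≥ (0:ℝ), F t x = x) ∨ ∃ y, ConleyLe F x y ∧ ConleyLe F y x}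

/-- Shadow chain-recurrent points. -/
def RS (F : ℝ → X → X) : Set X :=
  {x | (∀ t ≥ (0:ℝ), F t x = x) ∨ ∃ y, ShadowLe F x y ∧ ShadowLe F y x}

/-- A Conley node: a maximal set of mutually Conley chain-equivalent points. -/
def IsConleyNode (F : ℝ → X → X) (M : Set X) : Prop :=
  (∀ x ∈ M, ∀ y ∈ M, ConleyLe F x y ∧ ConleyLe F y x) ∧
  ∀ M' : Set X, M ⊆ M' → (∀ x ∈ M', ∀ y ∈ M', ConleyLe F x y ∧ ConleyLe F y x) → M' = M

/-- A shadow node: a maximal set of mutually shadow chain-equivalent points. -/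
def IsShadowNode (F : ℝ → X → X) (M : Set X) : Prop :=
  (∀ x ∈ M, ∀ y ∈ M, ShadowLe F x y ∧ ShadowLe F y x) ∧
  ∀ M' : Set X, M ⊆ M' → (∀ x ∈ M', ∀ y ∈ M', ShadowLe F x y ∧ ShadowLe F y x) → M' = M

/-- `G` attracts `K` under `F`: for every `ε > 0`, eventually `F^t(K) ⊆ N_ε(G)`. -/
def Attracts (F : ℝ → X → X) (G K : Set X) : Prop :=
  ∀ ε > (0:ℝ), ∃ T > (0:ℝ), ∀ t ≥ T, F t '' K ⊆ Metric.thickening ε G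

/-- `W_ε(G) = ⋃_{t ≥ 0} F^t (N_ε(G))`. -/
def Wset (F : ℝ → X → X) (ε : ℝ) (G : Set X) : Set X :=
  ⋃ t ∈ Set.Ici (0:ℝ), F t '' Metric.thickening ε G

/-- `G` is the global attractor of `F`: a maximal invariant compact set
attracting every compact set. -/
def IsGlobalAttractor (F : ℝ → X → X) (G : Set X) : Prop :=
  IsCompact G ∧ (∀ t ≥ (0:ℝ), F t '' G = G) ∧
  (∀ K : Set X, IsCompact K → Attracts F G K) ∧
  (∀ G' : Set X, IsCompact G' → (∀ t ≥ (0:ℝ), F t '' G' = G') → G' ⊆ G)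

/-- `G` is a strong global attractor of `F`: moreover, for some `ε > 0`, `G`
attracts `N_ε(G)` and `F` is uniformly continuous on `[0,1] × W_ε(G)`. -/
def IsStrongGlobalAttractor (F : ℝ → X → X) (G : Set X) : Prop :=
  IsGlobalAttractor F G ∧ ∃ ε > (0:ℝ), Attracts F G (Metric.thickening ε G) ∧
    UniformContinuousOn (fun p : ℝ × X => F p.1 p.2) (Set.Icc (0:ℝ) 1 ×ˢ Wset F ε G)

open MeasureTheory intervalIntegral in
/-- a solution of the perturbed equation `z' = g(z) + u(t)` with a
small control `u` (`∫_t^{t+1} ‖u‖ < ε e^{-L}`), staying in a forward-invariant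
ball `B` on which `g` is `L`-Lipschitz, is `ε`-close to the orbits of the
semiflow `F` of `z' = g(z)`; i.e. it is a shadow `ε`-chain from `γ 0` to `γ T`. -/
theorem perturbed_solution_is_eps_chain_banach
    {E : Type*} [NormedAddCommGroup E] [NormedSpace ℝ E] [CompleteSpace E]
    (g : E → E) (F : ℝ → E → E) (hF : IsSemiflow F)
    (hsol : ∀ x : E, ∀ t ≥ (0:ℝ), HasDerivWithinAt (fun s => F s x) (g (F t x)) (Set.Ici 0) t)
    (c : E) (r : ℝ) (B : Set E) (hB : B = Metric.closedBall c r)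
    (hinv : ∀ t ≥ (0:ℝ), F t '' B ⊆ B)
    (L : ℝ) (hLip : ∀ x ∈ B, ∀ y ∈ B, ‖g x - g y‖ ≤ L * ‖x - y‖)
    (T : ℝ) (hT : 1 ≤ T) (ε : ℝ) (hε : 0 < ε)
    (u : ℝ → E) (hu : LocallyIntegrable u volume)
    (hu2 : ∀ t ∈ Set.Icc (0:ℝ) (T - 1), (∫ s in t..(t + 1), ‖u s‖) < ε * Real.exp (-L))
    (γ : ℝ → E) (hγB : ∀ t ∈ Set.Icc (0:ℝ) T, γ t ∈ B)
    (hγ : ∀ t ∈ Set.Icc (0:ℝ) T, γ t = γ 0 + ∫ s in (0:ℝ)..t, (g (γ s) + u s)) :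
    ∀ τ ∈ Set.Icc (0:ℝ) 1, ∀ t ∈ Set.Icc (0:ℝ) (T - τ),
      ‖γ (t + τ) - F τ (γ t)‖ < ε := by
    -- Case: B is a subsingleton
    by_cases hsub : ∀ x ∈ B, ∀ y ∈ B, x = y
    · intro τ hτ t ht
      have h1 : γ (t + τ) ∈ B := hγB _ ⟨by linarith [hτ.1, ht.1], by linarith [ht.2]⟩
      have h2 : γ t ∈ B := hγB _ ⟨ht.1, by linarith [ht.2, hτ.1]⟩
      have h3 : F τ (γ t) ∈ B := hinv τ hτ.1 ⟨γ t, h2, rfl⟩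
      rw [hsub _ h1 _ h3]
      simpa using hε
    · push_neg at hsub
      obtain ⟨x₀, hx₀, y₀, hy₀, hxy⟩ := hsub
      have hL0 : 0 ≤ L := by
        have h := hLip x₀ hx₀ y₀ hy₀
        have hpos : 0 < ‖x₀ - y₀‖ := by
          rw [norm_pos_iff, sub_ne_zero]; exact hxy
        nlinarith [norm_nonneg (g x₀ - g y₀)]
      have hT0 : (0:ℝ) ≤ T := by linarith
      have hγ0B : γ 0 ∈ B := hγB 0 ⟨le_refl _, hT0⟩
      have hr0 : 0 ≤ r := by
        have := hγ0B; rw [hB, Metric.mem_closedBall] at this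
        exact le_trans dist_nonneg this
      have hcB : c ∈ B := by rw [hB]; exact Metric.mem_closedBall_self hr0
      set M : ℝ := L * r + ‖g c‖ with hM
      have hgbdd : ∀ x ∈ B, ‖g x‖ ≤ M := by
        intro x hx
        have h1 : ‖g x - g c‖ ≤ L * ‖x - c‖ := hLip x hx c hcB
        have h2 : ‖x - c‖ ≤ r := by
          rw [← dist_eq_norm]; rw [hB, Metric.mem_closedBall] at hx; exact hx
        calc ‖g x‖ = ‖(g x - g c) + g c‖ := by rw [sub_add_cancel]
          _ ≤ ‖g x - g c‖ + ‖g c‖ := norm_add_le _ _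
          _ ≤ L * r + ‖g c‖ := by nlinarith
      have hgc : ContinuousOn g B := by
        have : LipschitzOnWith (Real.toNNReal L) g B := by
          rw [lipschitzOnWith_iff_dist_le_mul]
          intro x hx y hy
          rw [dist_eq_norm, dist_eq_norm]
          calc ‖g x - g y‖ ≤ L * ‖x - y‖ := hLip x hx y hy
            _ ≤ (Real.toNNReal L) * ‖x - y‖ := by
                gcongr; exact Real.le_coe_toNNReal L
        exact this.continuousOn
      set f : ℝ → E := fun s => g (γ s) + u s with hf
      have huInt : ∀ a b : ℝ, IntervalIntegrable u volume a b := by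
        intro a b
        rw [intervalIntegrable_iff]
        exact (hu.integrableOn_isCompact isCompact_Icc).mono_set Set.uIoc_subset_uIcc
      have huNormInt : ∀ a b : ℝ, IntervalIntegrable (fun s => ‖u s‖) volume a b := by
        intro a b
        rw [intervalIntegrable_iff]
        exact ((hu.integrableOn_isCompact isCompact_Icc).mono_set Set.uIoc_subset_uIcc).norm
      -- Integrability of f on (0, T] (bootstrap argument)
      have hfInt : IntegrableOn f (Set.Ioc 0 T) volume := by
        set A : Set ℝ := {a | a ∈ Set.Icc (0:ℝ) T ∧ IntegrableOn f (Set.Ioc 0 a) volume} with hA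
        have h0A : (0:ℝ) ∈ A := by
          constructor
          · exact ⟨le_refl _, hT0⟩
          · simp [IntegrableOn]
        have hAne : A.Nonempty := ⟨0, h0A⟩
        have hbdd : BddAbove A := ⟨T, fun a ha => ha.1.2⟩
        set t' := sSup A with ht'
        have ht'0 : 0 ≤ t' := le_csSup hbdd h0A
        have ht'T : t' ≤ T := csSup_le hAne fun a ha => ha.1.2
        have hconst : ∀ a ∈ Set.Ioc t' T, γ a = γ 0 := by
          intro a ha
          have ha0 : 0 ≤ a := le_trans ht'0 ha.1.le
          have hnint : ¬ IntervalIntegrable f volume 0 a := by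
            intro h
            have haA : a ∈ A := ⟨⟨ha0, ha.2⟩,
              (intervalIntegrable_iff_integrableOn_Ioc_of_le ha0).mp h⟩
            exact absurd (le_csSup hbdd haA) (not_le.mpr ha.1)
          have h1 := hγ a ⟨ha0, ha.2⟩
          rw [intervalIntegral.integral_undef hnint] at h1
          simpa using h1
        have hlt : ∀ s, 0 ≤ s → s < t' → IntegrableOn f (Set.Ioc 0 s) volume := by
          intro s hs hst
          obtain ⟨a, haA, hsa⟩ := exists_lt_of_lt_csSup hAne hst
          exact haA.2.mono_set (Set.Ioc_subset_Ioc le_rfl hsa.le)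
        have hγIco : ContinuousOn γ (Set.Ico 0 t') := by
          intro a ha
          obtain ⟨s, has, hst⟩ := exists_between ha.2
          have hs0 : 0 ≤ s := le_trans ha.1 has.le
          have hsT : s ≤ T := le_trans hst.le ht'T
          have hint : IntegrableOn f (Set.uIcc 0 s) volume := by
            rw [Set.uIcc_of_le hs0, integrableOn_Icc_iff_integrableOn_Ioc]
            exact hlt s hs0 hst
          have hprim : ContinuousOn (fun b => γ 0 + ∫ σ in (0:ℝ)..b, f σ) (Set.uIcc 0 s) :=
            continuousOn_const.add (intervalIntegral.continuousOn_primitive_interval hint)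
          have hγs : ContinuousOn γ (Set.Icc 0 s) := by
            rw [Set.uIcc_of_le hs0] at hprim
            exact hprim.congr fun b hb => hγ b ⟨hb.1, le_trans hb.2 hsT⟩
          have hcw : ContinuousWithinAt γ (Set.Icc 0 s) a := hγs a ⟨ha.1, has.le⟩
          apply hcw.mono_of_mem_nhdsWithin
          apply Filter.mem_of_superset (inter_mem_nhdsWithin (Set.Ico 0 t') (Iio_mem_nhds has))
          rintro z ⟨hz1, hz2⟩
          exact ⟨hz1.1, le_of_lt hz2⟩
        have hmA : AEStronglyMeasurable (fun s => g (γ s)) (volume.restrict (Set.Ico 0 t')) := by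
          have : ContinuousOn (fun s => g (γ s)) (Set.Ico 0 t') :=
            hgc.comp hγIco fun a ha => hγB a ⟨ha.1, le_trans ha.2.le ht'T⟩
          exact this.aestronglyMeasurable measurableSet_Ico
        have hmB : AEStronglyMeasurable (fun s => g (γ s)) (volume.restrict (Set.Ioc t' T)) := by
          apply (aestronglyMeasurable_const (b := g (γ 0))).congr
          rw [Filter.EventuallyEq, ae_restrict_iff' measurableSet_Ioc]
          exact Filter.Eventually.of_forall fun a ha => by rw [hconst a ha]
        have hmC : AEStronglyMeasurable (fun s => g (γ s)) (volume.restrict {t'}) := by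
          rw [Measure.restrict_eq_zero.mpr (measure_singleton t')]
          exact aestronglyMeasurable_zero_measure _
        have hmeasγ : AEStronglyMeasurable (fun s => g (γ s))
            (volume.restrict (Set.Ioc 0 T)) := by
          have hsub2 : Set.Ioc (0:ℝ) T ⊆ (Set.Ico 0 t' ∪ Set.Ioc t' T) ∪ {t'} := by
            intro z hz
            rcases lt_trichotomy z t' with h | h | h
            · exact Or.inl (Or.inl ⟨hz.1.le, h⟩)
            · exact Or.inr (by simp [h])
            · exact Or.inl (Or.inr ⟨h, hz.2⟩)
          have hle : volume.restrict (Set.Ioc 0 T) ≤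
              (volume.restrict (Set.Ico 0 t') + volume.restrict (Set.Ioc t' T))
                + volume.restrict {t'} := by
            refine le_trans (Measure.restrict_mono hsub2 le_rfl) ?_
            refine le_trans (Measure.restrict_union_le _ _) ?_
            exact add_le_add (Measure.restrict_union_le _ _) le_rfl
          have h1 : AEStronglyMeasurable (fun s => g (γ s))
              ((volume.restrict (Set.Ico 0 t') + volume.restrict (Set.Ioc t' T))
                + volume.restrict {t'}) := by
            rw [aestronglyMeasurable_add_measure_iff]
            exact ⟨by rw [aestronglyMeasurable_add_measure_iff]; exact ⟨hmA, hmB⟩, hmC⟩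
          exact h1.mono_measure hle
        have hmeasf : AEStronglyMeasurable f (volume.restrict (Set.Ioc 0 T)) :=
          hmeasγ.add (hu.aestronglyMeasurable.restrict)
        apply Integrable.mono' (g := fun s => M + ‖u s‖)
        · exact ((integrableOn_const_iff (C := M)).mpr (Or.inr (by simp))).add
            (((hu.integrableOn_isCompact (isCompact_Icc (a := (0:ℝ)) (b := T))).mono_set
              Set.Ioc_subset_Icc_self).norm)
        · exact hmeasf
        · rw [ae_restrict_iff' measurableSet_Ioc]
          refine Filter.Eventually.of_forall fun s hs => ?_
          calc ‖f s‖ ≤ ‖g (γ s)‖ + ‖u s‖ := norm_add_le _ _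
            _ ≤ M + ‖u s‖ := by
                have := hgbdd (γ s) (hγB s ⟨hs.1.le, hs.2⟩); linarith
      have hfII : ∀ a b, 0 ≤ a → a ≤ b → b ≤ T → IntervalIntegrable f volume a b := by
        intro a b ha hab hbT
        rw [intervalIntegrable_iff_integrableOn_Ioc_of_le hab]
        exact hfInt.mono_set (Set.Ioc_subset_Ioc ha hbT)
      have hγcont : ContinuousOn γ (Set.Icc 0 T) := by
        have hint : IntegrableOn f (Set.uIcc 0 T) volume := by
          rw [Set.uIcc_of_le hT0, integrableOn_Icc_iff_integrableOn_Ioc]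
          exact hfInt
        have hprim : ContinuousOn (fun b => γ 0 + ∫ σ in (0:ℝ)..b, f σ) (Set.uIcc 0 T) :=
          continuousOn_const.add (intervalIntegral.continuousOn_primitive_interval hint)
        rw [Set.uIcc_of_le hT0] at hprim
        exact hprim.congr fun b hb => hγ b hb
      -- Now the main estimate
      intro τ hτ t ht
      obtain ⟨hτ0, hτ1⟩ := hτ
      obtain ⟨ht0, htT⟩ := ht
      set x := γ t with hx
      have hxB : x ∈ B := hγB t ⟨ht0, by linarith⟩
      set y : ℝ → E := fun s => F s x with hy
      have hyB : ∀ s, 0 ≤ s → y s ∈ B := fun s hs => hinv s hs ⟨x, hxB, rfl⟩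
      have hycont : ContinuousOn y (Set.Ici 0) := fun s hs =>
        (hsol x s hs).continuousWithinAt
      have hgyInt : ∀ s, 0 ≤ s → IntervalIntegrable (fun σ => g (y σ)) volume 0 s := by
        intro s hs
        apply ContinuousOn.intervalIntegrable
        rw [Set.uIcc_of_le hs]
        exact hgc.comp (hycont.mono (fun z hz => hz.1)) fun σ hσ => hyB σ hσ.1
      have hyFTC : ∀ s, 0 ≤ s → y s = x + ∫ σ in (0:ℝ)..s, g (y σ) := by
        intro s hs
        have h : (∫ σ in (0:ℝ)..s, g (y σ)) = y s - y 0 :=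
          intervalIntegral.integral_eq_sub_of_hasDeriv_right_of_le hs
            (hycont.mono (fun z (hz : z ∈ Set.Icc 0 s) => hz.1))
            (fun σ hσ => ((hsol x σ hσ.1.le).mono (fun z (hz : z ∈ Set.Ioi σ) =>
              le_trans hσ.1.le (le_of_lt hz))))
            (hgyInt s hs)
        have hy0 : y 0 = x := hF.map_zero x
        rw [hy0] at h
        rw [h]; abel
      set t0 := min t (T - 1) with ht0def
      have ht00 : 0 ≤ t0 := le_min ht0 (by linarith)
      have ht0T : t0 ≤ T - 1 := min_le_right _ _
      have hsubI : Set.Ioc t (t + τ) ⊆ Set.Ioc t0 (t0 + 1) := by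
        apply Set.Ioc_subset_Ioc (min_le_left _ _)
        rcases le_total t (T - 1) with h | h
        · rw [ht0def, min_eq_left h]; linarith
        · rw [ht0def, min_eq_right h]; linarith
      set V : ℝ := ∫ σ in t0..(t0 + 1), ‖u σ‖ with hV
      have hV0 : 0 ≤ V :=
        intervalIntegral.integral_nonneg (by linarith) fun _ _ => norm_nonneg _
      have hVε : V < ε * Real.exp (-L) := hu2 t0 ⟨ht00, ht0T⟩
      -- the clamp function and error norm
      set cl : ℝ → ℝ := fun s => min (max s 0) τ with hcl
      have hclmem : ∀ s, cl s ∈ Set.Icc 0 τ := fun s =>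
        ⟨le_min (le_max_right _ _) hτ0, min_le_right _ _⟩
      have hclid : ∀ s ∈ Set.Icc 0 τ, cl s = s := by
        intro s hs
        rw [hcl]; simp only []
        rw [max_eq_left hs.1, min_eq_left hs.2]
      have hclcont : Continuous cl := (continuous_id.max continuous_const).min continuous_const
      set N : ℝ → ℝ := fun s => ‖γ (t + cl s) - y (cl s)‖ with hN
      have hNcont : Continuous N := by
        apply Continuous.norm
        apply Continuous.sub
        · apply hγcont.comp_continuous (continuous_const.add hclcont)
          intro s
          have := hclmem s
          exact ⟨by simp only [Pi.add_apply]; linarith [this.1], by simp only [Pi.add_apply]; linarith [this.2]⟩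
        · exact hycont.comp_continuous hclcont fun s => (hclmem s).1
      have hNnonneg : ∀ s, 0 ≤ N s := fun s => norm_nonneg _
      set R : ℝ → ℝ := fun s => ∫ σ in (0:ℝ)..s, N σ with hR
      have hRderiv : ∀ s : ℝ, HasDerivAt R (N s) s := fun s =>
        intervalIntegral.integral_hasDerivAt_right (hNcont.intervalIntegrable _ _)
          hNcont.stronglyMeasurable.stronglyMeasurableAtFilter hNcont.continuousAt
      have hRnonneg : ∀ s, 0 ≤ s → 0 ≤ R s := fun s hs =>
        intervalIntegral.integral_nonneg hs fun σ _ => hNnonneg σ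
      -- key integral inequality
      have hkey : ∀ s ∈ Set.Icc 0 τ, ‖γ (t + s) - y s‖ ≤ L * R s + V := by
        intro s hs
        obtain ⟨hs0, hsτ⟩ := hs
        have htsT : t + s ≤ T := by linarith
        have e1 : γ (t + s) - γ t = ∫ σ in t..(t + s), f σ := by
          have h1 := hγ (t + s) ⟨by linarith, htsT⟩
          have h2 := hγ t ⟨ht0, by linarith⟩
          have hi1 : IntervalIntegrable f volume 0 t := hfII 0 t le_rfl ht0 (by linarith)
          have hi2 : IntervalIntegrable f volume t (t + s) :=
            hfII t (t + s) ht0 (by linarith) htsT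
          rw [h1, h2, ← intervalIntegral.integral_add_adjacent_intervals hi1 hi2]
          abel
        have hi2 : IntervalIntegrable f volume t (t + s) :=
          hfII t (t + s) ht0 (by linarith) htsT
        have hgγi : IntervalIntegrable (fun σ => g (γ σ)) volume t (t + s) := by
          have heq : (fun σ => g (γ σ)) = fun σ => f σ - u σ := by
            funext σ; simp [hf]
          rw [heq]
          exact hi2.sub (huInt _ _)
        have e2 : (∫ σ in t..(t + s), f σ)
            = (∫ σ in t..(t + s), g (γ σ)) + ∫ σ in t..(t + s), u σ := by
          rw [hf, intervalIntegral.integral_add hgγi (huInt _ _)]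
        have e3 : (∫ σ in (0:ℝ)..s, g (γ (t + σ))) = ∫ σ in t..(t + s), g (γ σ) := by
          have := intervalIntegral.integral_comp_add_left (a := (0:ℝ)) (b := s)
            (fun σ => g (γ σ)) t
          simpa using this
        have e4 := hyFTC s hs0
        have hgγ2i : IntervalIntegrable (fun σ => g (γ (t + σ))) volume 0 s := by
          apply ContinuousOn.intervalIntegrable
          rw [Set.uIcc_of_le hs0]
          apply hgc.comp
          · apply hγcont.comp (continuous_const.add continuous_id).continuousOn
            intro σ hσ
            exact ⟨by simp; linarith [hσ.1], by simp; linarith [hσ.2]⟩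
          · intro σ hσ
            exact hγB _ ⟨by linarith [hσ.1], by linarith [hσ.2]⟩
        have e5 : γ (t + s) - y s
            = (∫ σ in (0:ℝ)..s, (g (γ (t + σ)) - g (y σ))) + ∫ σ in t..(t + s), u σ := by
          rw [intervalIntegral.integral_sub hgγ2i (hgyInt s hs0), e3]
          have : γ (t + s) = γ t + ((∫ σ in t..(t + s), g (γ σ)) + ∫ σ in t..(t + s), u σ) := by
            rw [← e2, ← e1]; abel
          rw [this, e4, ← hx]
          abel
        have hbound1 : ‖∫ σ in (0:ℝ)..s, (g (γ (t + σ)) - g (y σ))‖ ≤ L * R s := by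
          calc ‖∫ σ in (0:ℝ)..s, (g (γ (t + σ)) - g (y σ))‖
              ≤ ∫ σ in (0:ℝ)..s, ‖g (γ (t + σ)) - g (y σ)‖ :=
                intervalIntegral.norm_integral_le_integral_norm hs0
            _ ≤ ∫ σ in (0:ℝ)..s, L * N σ := by
                apply intervalIntegral.integral_mono_on hs0
                · exact (hgγ2i.sub (hgyInt s hs0)).norm
                · exact (continuous_const.mul hNcont).intervalIntegrable _ _
                · intro σ hσ
                  have hσmem : σ ∈ Set.Icc 0 τ := ⟨hσ.1, le_trans hσ.2 hsτ⟩
                  have hclσ : cl σ = σ := hclid σ hσmem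
                  rw [hN]; simp only [hclσ]
                  exact hLip _ (hγB _ ⟨by linarith [hσ.1], by linarith [hσ.2]⟩)
                    _ (hyB σ hσ.1)
            _ = L * R s := by rw [intervalIntegral.integral_const_mul]
        have hbound2 : ‖∫ σ in t..(t + s), u σ‖ ≤ V := by
          calc ‖∫ σ in t..(t + s), u σ‖ ≤ ∫ σ in t..(t + s), ‖u σ‖ :=
                intervalIntegral.norm_integral_le_integral_norm (by linarith)
            _ ≤ V := by
                rw [hV, intervalIntegral.integral_of_le (by linarith),
                  intervalIntegral.integral_of_le (by linarith)]
                apply MeasureTheory.setIntegral_mono_set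
                · exact ((hu.integrableOn_isCompact isCompact_Icc).mono_set
                    Set.Ioc_subset_Icc_self).norm
                · exact Filter.Eventually.of_forall fun σ => norm_nonneg _
                · exact HasSubset.Subset.eventuallyLE
                    (le_trans (Set.Ioc_subset_Ioc le_rfl (by linarith : t + s ≤ t + τ)) hsubI)
          -- note: hsubI covers Ioc t (t+s) ⊆ Ioc t0 (t0+1) since s ≤ τ
        calc ‖γ (t + s) - y s‖
            ≤ ‖∫ σ in (0:ℝ)..s, (g (γ (t + σ)) - g (y σ))‖ + ‖∫ σ in t..(t + s), u σ‖ := by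
              rw [e5]; exact norm_add_le _ _
          _ ≤ L * R s + V := add_le_add hbound1 hbound2
      -- Gronwall
      have hgron := norm_le_gronwallBound_of_norm_deriv_right_le
        (f := R) (f' := N) (δ := 0) (K := L) (ε := V) (a := 0) (b := τ)
        (fun s _ => (hRderiv s).continuousAt.continuousWithinAt)
        (fun s _ => (hRderiv s).hasDerivWithinAt)
        (by simp [hR])
        (by
          intro s hs
          have hclσ : cl s = s := hclid s ⟨hs.1, hs.2.le⟩
          have h1 : ‖N s‖ = N s := Real.norm_of_nonneg (hNnonneg s)
          have h2 : ‖R s‖ = R s := Real.norm_of_nonneg (hRnonneg s hs.1)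
          rw [h1, h2]
          have := hkey s ⟨hs.1, hs.2.le⟩
          rw [hN]; simp only [hclσ]
          exact this)
      have hRτ : R τ ≤ gronwallBound 0 L V τ := by
        have := hgron τ ⟨hτ0, le_refl τ⟩
        rw [Real.norm_of_nonneg (hRnonneg τ hτ0), sub_zero] at this
        exact this
      have hfinal : ‖γ (t + τ) - y τ‖ ≤ L * R τ + V := hkey τ ⟨hτ0, le_refl τ⟩
      have hgb : L * gronwallBound 0 L V τ + V ≤ V * Real.exp L := by
        rcases eq_or_lt_of_le hL0 with h | h
        · rw [← h, gronwallBound_K0]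
          simp [Real.exp_zero]
        · rw [gronwallBound]
          rw [if_neg (ne_of_gt h)]
          have hexp : Real.exp (L * τ) ≤ Real.exp L := by
            apply Real.exp_le_exp.mpr
            nlinarith
          have : L * (0 * Real.exp (L * τ) + V / L * (Real.exp (L * τ) - 1)) + V
              = V * Real.exp (L * τ) := by
            field_simp
            ring
          rw [this]
          exact mul_le_mul_of_nonneg_left hexp hV0
      have : ‖γ (t + τ) - y τ‖ ≤ V * Real.exp L := by
        refine le_trans hfinal (le_trans ?_ hgb)
        have := hRτ
        nlinarith
      calc ‖γ (t + τ) - F τ (γ t)‖ = ‖γ (t + τ) - y τ‖ := rfl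
        _ ≤ V * Real.exp L := this
        _ < (ε * Real.exp (-L)) * Real.exp L :=
            mul_lt_mul_of_pos_right hVε (Real.exp_pos L)
        _ = ε := by rw [mul_assoc, ← Real.exp_add]; simp
end

section
/- Let F be a semiflow on X = [0,1] (with the standard metric) such that F^t(1) = 1 for all t ≥ 0 and F^t(x) > x for every x ∈ [0,1) and every t > 0. Then for every y ∈ [0,1] with y ≥ F^1(0), we have 0 ≽_S y, i.e. for every ε > 0 there exists an ε-chain (shadow chain) from 0 to y. -/
open Set Metric Filter

variable {X : Type*} [MetricSpace X]

/-- for a semiflow on `[0,1]` fixing `1` and moving every other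
point strictly rightwards, `0 ≽_S y` for every `y ≥ F^1(0)`. -/
theorem shadowLe_example_on_unit_interval
    (F : ℝ → (Set.Icc (0:ℝ) 1) → (Set.Icc (0:ℝ) 1)) (hF : IsSemiflow F)
    (hfix : ∀ t ≥ (0:ℝ), F t ⟨1, by norm_num⟩ = ⟨1, by norm_num⟩)
    (hmove : ∀ x : Set.Icc (0:ℝ) 1, (x : ℝ) < 1 → ∀ t > (0:ℝ), (x : ℝ) < (F t x : ℝ))
    (y : Set.Icc (0:ℝ) 1) (hy : ((F 1 ⟨0, by norm_num⟩ : Set.Icc (0:ℝ) 1) : ℝ) ≤ (y : ℝ)) :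
    ShadowLe F ⟨0, by norm_num⟩ y := by
  intro ε hε
  set x0 : Set.Icc (0:ℝ) 1 := ⟨0, by norm_num⟩ with hx0
  set g : ℝ → ℝ := fun t => (F t x0 : ℝ) with hg
  -- basic continuity facts
  have hcontF : ContinuousOn (fun t : ℝ => F t x0) (Set.Ici 0) := by
    have : ContinuousOn ((fun p : ℝ × (Set.Icc (0:ℝ) 1) => F p.1 p.2) ∘ (fun t : ℝ => (t, x0)))
        (Set.Ici 0) :=
      hF.cont.comp ((continuous_id.prodMk continuous_const).continuousOn)
        (fun t ht => ⟨ht, Set.mem_univ _⟩)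
    exact this
  have hCA : ∀ t : ℝ, 0 < t → ContinuousAt (fun t : ℝ => F t x0) t := by
    intro t ht
    have hbig : ContinuousAt (fun p : ℝ × (Set.Icc (0:ℝ) 1) => F p.1 p.2) (t, x0) :=
      hF.cont.continuousAt (prod_mem_nhds (Ici_mem_nhds ht) Filter.univ_mem)
    have hpair : ContinuousAt (fun s : ℝ => ((s, x0) : ℝ × (Set.Icc (0:ℝ) 1))) t :=
      (continuous_id.prodMk continuous_const).continuousAt
    exact ContinuousAt.comp (f := fun s : ℝ => ((s, x0) : ℝ × (Set.Icc (0:ℝ) 1))) hbig hpair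
  -- monotonicity of the orbit of 0
  have hmono : ∀ s t : ℝ, 0 ≤ s → s ≤ t → g s ≤ g t := by
    intro s t hs hst
    rcases eq_or_lt_of_le hst with rfl | hlt
    · exact le_rfl
    · have hFt : F t x0 = F (t - s) (F s x0) := by
        rw [← hF.map_add (t - s) s (by linarith) hs]
        ring_nf
      rcases lt_or_eq_of_le (F s x0).2.2 with h1 | h1
      · have := hmove (F s x0) h1 (t - s) (by linarith)
        rw [hg]; dsimp only; rw [hFt]; exact le_of_lt this
      · have hpt : F s x0 = ⟨1, by norm_num⟩ := Subtype.ext h1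
        rw [hg]; dsimp only; rw [hFt, hpt, hfix (t - s) (by linarith), ← hpt]
  -- the orbit of 0 tends to 1 along ℕ
  have key : ∀ c : ℝ, c < 1 → ∃ n : ℕ, c < g n := by
    by_contra h
    push_neg at h
    obtain ⟨c, hc1, hb⟩ := h
    set u : ℕ → Set.Icc (0:ℝ) 1 := fun n => F n x0 with hu
    have humono : Monotone (fun n : ℕ => (u n : ℝ)) := by
      intro n m hnm
      exact hmono n m (Nat.cast_nonneg n) (by exact_mod_cast hnm)
    have hbdd : BddAbove (Set.range fun n : ℕ => (u n : ℝ)) :=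
      ⟨1, by rintro _ ⟨n, rfl⟩; exact (u n).2.2⟩
    set L : ℝ := ⨆ n : ℕ, (u n : ℝ) with hL
    have htend : Filter.Tendsto (fun n : ℕ => (u n : ℝ)) Filter.atTop (nhds L) :=
      tendsto_atTop_ciSup humono hbdd
    have hL0 : 0 ≤ L := le_trans (u 0).2.1 (le_ciSup hbdd 0)
    have hLc : L ≤ c := ciSup_le hb
    have hL1 : L < 1 := lt_of_le_of_lt hLc hc1
    set ℓ : Set.Icc (0:ℝ) 1 := ⟨L, ⟨hL0, le_of_lt hL1⟩⟩ with hℓ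
    have htendu : Filter.Tendsto u Filter.atTop (nhds ℓ) := by
      rw [tendsto_subtype_rng]; exact htend
    have hshift : Filter.Tendsto (fun n : ℕ => u (n + 1)) Filter.atTop (nhds ℓ) :=
      htendu.comp (tendsto_add_atTop_nat 1)
    have hcont1 : ContinuousAt (fun x : Set.Icc (0:ℝ) 1 => F 1 x) ℓ := by
      have hbig : ContinuousAt (fun p : ℝ × (Set.Icc (0:ℝ) 1) => F p.1 p.2) (1, ℓ) :=
        hF.cont.continuousAt (prod_mem_nhds (Ici_mem_nhds one_pos) Filter.univ_mem)
      have hpair : ContinuousAt (fun x : Set.Icc (0:ℝ) 1 => ((1, x) : ℝ × (Set.Icc (0:ℝ) 1))) ℓ :=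
        (continuous_const.prodMk continuous_id).continuousAt
      exact ContinuousAt.comp (f := fun x : Set.Icc (0:ℝ) 1 => ((1, x) : ℝ × (Set.Icc (0:ℝ) 1))) hbig hpair
    have hF1 : Filter.Tendsto (fun n : ℕ => F 1 (u n)) Filter.atTop (nhds (F 1 ℓ)) :=
      hcont1.tendsto.comp htendu
    have heq : ∀ n : ℕ, F 1 (u n) = u (n + 1) := by
      intro n
      rw [hu]; dsimp only
      rw [← hF.map_add 1 n one_pos.le (Nat.cast_nonneg n)]
      norm_num
      congr 1
      ring
    have hfixℓ : F 1 ℓ = ℓ := by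
      refine tendsto_nhds_unique ?_ hshift
      exact hF1.congr heq
    have := hmove ℓ hL1 1 one_pos
    rw [hfixℓ] at this
    exact lt_irrefl _ this
  -- main case split
  rcases lt_or_eq_of_le y.2.2 with hylt | hyeq
  · -- y < 1 : y is on the orbit of 0, use the genuine orbit as the chain
    obtain ⟨n, hn⟩ := key y hylt
    set M : ℝ := (n : ℝ) + 1 with hM
    have hM1 : (1:ℝ) ≤ M := by have := Nat.cast_nonneg (α := ℝ) n; linarith
    have hyM : (y : ℝ) ≤ g M := le_of_lt (lt_of_lt_of_le hn (hmono n M (Nat.cast_nonneg n) (by linarith)))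
    have hgcont : ContinuousOn g (Set.Icc 1 M) := by
      exact continuous_subtype_val.comp_continuousOn
        (hcontF.mono (fun t ht => le_trans zero_le_one ht.1))
    have hIVT := intermediate_value_Icc hM1 hgcont
    have hymem : (y : ℝ) ∈ Set.Icc (g 1) (g M) := ⟨hy, hyM⟩
    obtain ⟨T, hTmem, hgT⟩ := hIVT hymem
    refine ⟨T, fun t => F t x0, hTmem.1, ?_, hF.map_zero x0, Subtype.ext hgT, ?_⟩
    ·
      have hT0 : (0:ℝ) ≤ T := le_trans zero_le_one hTmem.1
      refine ⟨⟨∅, fun t ht _ => (hcontF.mono (fun s hs => hs.1)) t ht⟩, ?_, ?_⟩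
      · intro t ht
        exact ⟨F t x0, ((hCA t ht.1).tendsto).mono_left nhdsWithin_le_nhds⟩
      · intro t ht
        refine ⟨F t x0, (hcontF t ht.1).mono_left ?_⟩
        exact nhdsWithin_mono t (fun s hs => le_of_lt (lt_of_le_of_lt ht.1 hs))
    · intro τ hτ t ht
      have : F (t + τ) x0 = F τ (F t x0) := by
        rw [add_comm]; exact hF.map_add τ t hτ.1 ht.1 x0
      simpa [this] using hε
  · -- y = 1 : follow the orbit until within ε/2 of 1, then jump to 1
    obtain ⟨n, hn⟩ := key (1 - ε/2) (by linarith)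
    set T : ℝ := (n : ℝ) + 1 with hT
    have hT1 : (1:ℝ) ≤ T := by have := Nat.cast_nonneg (α := ℝ) n; linarith
    have hT0 : (0:ℝ) < T := lt_of_lt_of_le one_pos hT1
    have hgT : 1 - ε/2 < g T :=
      lt_of_lt_of_le hn (hmono n T (Nat.cast_nonneg n) (by linarith))
    set γ : ℝ → Set.Icc (0:ℝ) 1 := fun t => if t = T then y else F t x0 with hγ
    refine ⟨T, γ, hT1, ?_, ?_, if_pos rfl, ?_⟩
    · -- piecewise continuity, with the single jump at T
      refine ⟨⟨{T}, ?_⟩, ?_, ?_⟩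
      · intro t ht htS
        have htne : t ≠ T := by simpa using htS
        have hcw : ContinuousWithinAt (fun t : ℝ => F t x0) (Set.Icc 0 T) t :=
          (hcontF.mono (fun s hs => hs.1)) t ht
        refine hcw.congr_of_eventuallyEq ?_ (if_neg htne)
        have hmem : {s : ℝ | s ≠ T} ∈ nhds t := isOpen_compl_singleton.mem_nhds htne
        filter_upwards [nhdsWithin_le_nhds hmem] with s hs
        exact if_neg hs
      · intro t ht
        refine ⟨F t x0, ?_⟩
        have h1 : Filter.Tendsto (fun t : ℝ => F t x0) (nhdsWithin t (Set.Iio t))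
            (nhds (F t x0)) := ((hCA t ht.1).tendsto).mono_left nhdsWithin_le_nhds
        refine h1.congr' ?_
        filter_upwards [self_mem_nhdsWithin] with s hs
        exact (if_neg (ne_of_lt (lt_of_lt_of_le hs ht.2))).symm
      · intro t ht
        refine ⟨F t x0, ?_⟩
        have h1 : Filter.Tendsto (fun t : ℝ => F t x0) (nhdsWithin t (Set.Ioi t))
            (nhds (F t x0)) := by
          refine (hcontF t ht.1).mono_left ?_
          exact nhdsWithin_mono t (fun s hs => le_of_lt (lt_of_le_of_lt ht.1 hs))
        refine h1.congr' ?_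
        have hmem : Set.Iio T ∈ nhds t := isOpen_Iio.mem_nhds ht.2
        filter_upwards [nhdsWithin_le_nhds hmem] with s hs
        exact (if_neg (ne_of_lt hs)).symm
    · -- γ 0 = 0
      rw [hγ]; dsimp only
      rw [if_neg (by linarith : (0:ℝ) ≠ T)]
      exact hF.map_zero x0
    · -- ε-closeness
      intro τ hτ t ht
      by_cases hend : t + τ = T
      · rcases eq_or_lt_of_le hτ.1 with hτ0 | hτ0
        · -- τ = 0
          have htT : t = T := by linarith [hτ0]
          simp [hγ, htT, ← hτ0, hF.map_zero, hε]
        · -- τ > 0 : the jump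
          have htlt : t < T := by linarith
          have hγt : γ t = F t x0 := if_neg (ne_of_lt htlt)
          have hγT : γ (t + τ) = y := if_pos hend
          have hFτ : F τ (F t x0) = F T x0 := by
            rw [← hF.map_add τ t (le_of_lt hτ0) ht.1, add_comm τ t, hend]
          rw [hγT, hγt, hFτ]
          rw [Subtype.dist_eq, Real.dist_eq, hyeq]
          have h1 : g T ≤ 1 := (F T x0).2.2
          rw [abs_of_nonneg (by simpa [hg] using sub_nonneg.mpr h1 : (0:ℝ) ≤ 1 - (F T x0 : ℝ))]
          have : (1:ℝ) - (F T x0 : ℝ) < ε/2 := by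
            have := hgT; simp only [hg] at this; linarith
          linarith
      · -- no jump yet
        have hlt : t + τ < T := lt_of_le_of_ne (by linarith [ht.2]) hend
        have htlt : t < T := by linarith [hτ.1]
        have hγt : γ t = F t x0 := if_neg (ne_of_lt htlt)
        have hγtτ : γ (t + τ) = F (t + τ) x0 := if_neg (ne_of_lt hlt)
        have hadd : F (t + τ) x0 = F τ (F t x0) := by
          rw [add_comm]; exact hF.map_add τ t hτ.1 ht.1 x0
        simp [hγt, hγtτ, hadd, hε]
end

section
/- Let F be a semiflow on X = [0,1] (with the standard metric) such that F^t(1) = 1 for all t ≥ 0 and F^t(x) > x for every x ∈ [0,1) and every t > 0. Then 0 ≽_C y implies y = 1; i.e. if for every ε > 0 and T > 0 there is an (ε,T)-chain from 0 to y, then y = 1. In particular, the relations ≽_C and ≽_S do not coincide for this semiflow. -/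
open Set Metric Filter

variable {X : Type*} [MetricSpace X]

/-- for a semiflow on `[0,1]` fixing `1` and moving every other
point strictly rightwards, `0 ≽_C y` implies `y = 1`; in particular the
relations `≽_C` and `≽_S` do not coincide for this semiflow. -/
theorem conleyLe_example_on_unit_interval
    (F : ℝ → (Set.Icc (0:ℝ) 1) → (Set.Icc (0:ℝ) 1)) (hF : IsSemiflow F)
    (hfix : ∀ t ≥ (0:ℝ), F t ⟨1, by norm_num⟩ = ⟨1, by norm_num⟩)
    (hmove : ∀ x : Set.Icc (0:ℝ) 1, (x : ℝ) < 1 → ∀ t > (0:ℝ), (x : ℝ) < (F t x : ℝ))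
    (y : Set.Icc (0:ℝ) 1) (hy : ConleyLe F ⟨0, by norm_num⟩ y) :
    y = ⟨1, by norm_num⟩ := by
  by_contra hne
  have hy1 : (y : ℝ) < 1 := lt_of_le_of_ne y.2.2 fun h => hne (Subtype.ext h)
  set o : Set.Icc (0:ℝ) 1 := ⟨0, by norm_num⟩ with ho
  set a : ℝ := (y : ℝ) with ha
  set b : ℝ := (a + 1) / 2 with hbdef
  have ha0 : 0 ≤ a := y.2.1
  have hab : a < b := by rw [hbdef]; linarith
  have hb1 : b < 1 := by rw [hbdef]; linarith
  -- orbits move (weakly) rightwards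
  have hA : ∀ (x : Set.Icc (0:ℝ) 1) (s : ℝ), 0 ≤ s → (x : ℝ) ≤ (F s x : ℝ) := by
    intro x s hs
    rcases eq_or_lt_of_le hs with h | h
    · rw [← h, hF.map_zero]
    rcases lt_or_eq_of_le x.2.2 with h1 | h1
    · exact (hmove x h1 s h).le
    · have hx : x = ⟨1, by norm_num⟩ := Subtype.ext h1
      rw [hx, hfix s hs]
  have hB : ∀ (x : Set.Icc (0:ℝ) 1) (s u : ℝ), 0 ≤ s → s ≤ u →
      (F s x : ℝ) ≤ (F u x : ℝ) := by
    intro x s u hs hsu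
    have h1 : F u x = F (u - s) (F s x) := by
      rw [← hF.map_add (u - s) s (by linarith) hs, sub_add_cancel]
    rw [h1]
    exact hA (F s x) (u - s) (by linarith)
  -- continuity of the time-one map
  have hc1 : Continuous fun z : Set.Icc (0:ℝ) 1 => F 1 z := by
    refine continuous_iff_continuousAt.2 fun z => ?_
    have hca : ContinuousAt (fun p : ℝ × Set.Icc (0:ℝ) 1 => F p.1 p.2) (1, z) :=
      hF.cont.continuousAt (prod_mem_nhds (Ici_mem_nhds one_pos) univ_mem)
    exact hca.comp ((continuous_const.prodMk continuous_id).continuousAt)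
  -- minimal displacement on [0, b]
  obtain ⟨x0, hx0K, hx0⟩ :=
    ((isClosed_Iic.preimage continuous_subtype_val).isCompact).exists_isMinOn
      (s := Subtype.val ⁻¹' Set.Iic b)
      ⟨o, show (o : ℝ) ≤ b by simpa [ho] using (le_of_lt (lt_of_le_of_lt ha0 hab))⟩
      (((continuous_subtype_val.comp hc1).sub continuous_subtype_val).continuousOn)
  set m : ℝ := (F 1 x0 : ℝ) - (x0 : ℝ) with hmdef
  have hm_pos : 0 < m := by
    have : (x0 : ℝ) < 1 := lt_of_le_of_lt hx0K hb1
    have := hmove x0 this 1 one_pos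
    rw [hmdef]; linarith
  have hm : ∀ x : Set.Icc (0:ℝ) 1, (x : ℝ) ≤ b → (x : ℝ) + m ≤ (F 1 x : ℝ) := by
    intro x hx
    have h := isMinOn_iff.1 hx0 x hx
    simp only [Pi.sub_apply, Function.comp_apply] at h
    rw [hmdef]
    linarith
  -- find a time pushing 0 beyond b
  have hmono : Monotone fun n : ℕ => (F n o : ℝ) := fun n m' hnm =>
    hB o n m' (Nat.cast_nonneg n) (Nat.cast_le.2 hnm)
  have hbdd : BddAbove (Set.range fun n : ℕ => (F n o : ℝ)) := by
    refine ⟨1, ?_⟩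
    rintro z ⟨n, rfl⟩
    exact (F n o).2.2
  obtain ⟨n0, hn0⟩ : ∃ n : ℕ, b < (F n o : ℝ) := by
    by_contra hcon
    push_neg at hcon
    set L : ℝ := ⨆ n : ℕ, (F n o : ℝ) with hL
    have hLb : L ≤ b := ciSup_le hcon
    have hL0 : 0 ≤ L := by
      have h0 : (F ((0:ℕ):ℝ) o : ℝ) ≤ L := le_ciSup hbdd 0
      have : F ((0:ℕ):ℝ) o = o := by
        rw [Nat.cast_zero, hF.map_zero]
      rw [this] at h0
      simpa [ho] using h0
    set zL : Set.Icc (0:ℝ) 1 := ⟨L, ⟨hL0, hLb.trans hb1.le⟩⟩ with hzL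
    have ht : Tendsto (fun n : ℕ => (F n o : ℝ)) atTop (nhds L) :=
      tendsto_atTop_ciSup hmono hbdd
    have hsub : Tendsto (fun n : ℕ => F n o) atTop (nhds zL) := by
      rw [tendsto_subtype_rng]
      exact ht
    have h2 : Tendsto (fun n : ℕ => (F 1 (F n o) : ℝ)) atTop (nhds (F 1 zL : ℝ)) :=
      (continuous_subtype_val.tendsto _).comp ((hc1.tendsto zL).comp hsub)
    have h2' : Tendsto (fun n : ℕ => (F (((n + 1 : ℕ)):ℝ) o : ℝ)) atTop
        (nhds (F 1 zL : ℝ)) := by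
      refine h2.congr fun n => ?_
      have hadd : F (1 + (n:ℝ)) o = F 1 (F n o) :=
        hF.map_add 1 n zero_le_one (Nat.cast_nonneg n) o
      have hcast : (((n + 1 : ℕ)):ℝ) = 1 + (n:ℝ) := by push_cast; ring
      rw [hcast, hadd]
    have h3 : Tendsto (fun n : ℕ => (F (((n + 1 : ℕ)):ℝ) o : ℝ)) atTop (nhds L) :=
      ht.comp (tendsto_add_atTop_nat 1)
    have hfix1 : (F 1 zL : ℝ) = L := tendsto_nhds_unique h2' h3
    have hL1 : L < 1 := lt_of_le_of_lt hLb hb1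
    have := hmove zL hL1 1 one_pos
    rw [hfix1] at this
    exact lt_irrefl _ this
  set T : ℝ := (n0 : ℝ) + 1 with hT
  have hT1 : (1:ℝ) ≤ T := by
    rw [hT]; have : (0:ℝ) ≤ (n0:ℝ) := Nat.cast_nonneg n0; linarith
  have hTb : b < (F T o : ℝ) :=
    lt_of_lt_of_le hn0 (hB o n0 T (Nat.cast_nonneg n0) (by rw [hT]; linarith))
  set ε : ℝ := min m (b - a) / 2 with hε
  have hεpos : 0 < ε := by
    rw [hε]
    have : 0 < min m (b - a) := lt_min hm_pos (by linarith)
    linarith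
  have hεm : ε ≤ m / 2 := by
    rw [hε]
    have := min_le_left m (b - a)
    linarith
  have hεba : ε ≤ (b - a) / 2 := by
    rw [hε]
    have := min_le_right m (b - a)
    linarith
  obtain ⟨N, c, t, hN, hc0, hcN, hstep⟩ := hy ε hεpos T (by linarith)
  have key : ∀ k, k ≤ N → 1 ≤ k → a < (c k : ℝ) := by
    intro k
    induction k with
    | zero => intro _ h; exact absurd h (by norm_num)
    | succ k ih =>
      intro hkN _
      obtain ⟨htk, hd⟩ := hstep k (by omega)
      have hdist : ((F (t k) (c k) : ℝ)) - ε < (c (k + 1) : ℝ) := by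
        rw [Subtype.dist_eq, Real.dist_eq, abs_sub_lt_iff] at hd
        linarith [hd.1]
      rcases Nat.eq_zero_or_pos k with rfl | hk
      · have hT0 : (F T o : ℝ) ≤ (F (t 0) (c 0) : ℝ) := by
          rw [hc0]
          exact hB o T (t 0) (by linarith) htk
        linarith
      · have hck : a < (c k : ℝ) := ih (by omega) hk
        rcases le_or_gt ((c k : ℝ)) b with hcb | hcb
        · have h1t : (F 1 (c k) : ℝ) ≤ (F (t k) (c k) : ℝ) :=
            hB (c k) 1 (t k) zero_le_one (le_trans hT1 htk)
          have := hm (c k) hcb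
          linarith
        · have := hA (c k) (t k) (by linarith)
          linarith
  have hfin := key N le_rfl hN
  rw [hcN] at hfin
  exact lt_irrefl _ hfin
end

section
/- Let F be a semiflow with strong compact dynamics on a metric space (X,d), with strong global attractor 𝒢, and let ε₀ > 0 witness the strongness (𝒢 attracts N_{ε₀}(𝒢) and (t,z) ↦ F^t(z) is uniformly continuous on [0,1] × W_{ε₀}(𝒢)). Then for every η ∈ (0, ε₀] there exists ε > 0 such that every ε-chain (shadow chain) γ : [0,T] → X with γ(0) ∈ 𝒢 satisfies dist(γ(t), 𝒢) < η for all t ∈ [0,T]. -/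
open Set Metric Filter

variable {X : Type*} [MetricSpace X]

/-- Auxiliary decreasing sequence of radii used in the shadowing argument. -/
noncomputable def seqDown (md : ℝ → ℝ) (δ : ℝ) : ℕ → ℝ
  | 0 => δ / 2
  | (j+1) => min (seqDown md δ j / 2) (md (seqDown md δ j / 2))

lemma seqDown_pos (md : ℝ → ℝ) (hmd : ∀ α, 0 < md α) (δ : ℝ) (hδ : 0 < δ) :
    ∀ j, 0 < seqDown md δ j
  | 0 => half_pos hδ
  | (j+1) => by
      have h := seqDown_pos md hmd δ hδ j
      exact lt_min (half_pos h) (hmd _)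

lemma seqDown_anti (md : ℝ → ℝ) (hmd : ∀ α, 0 < md α) (δ : ℝ) (hδ : 0 < δ) :
    ∀ {i j : ℕ}, i ≤ j → seqDown md δ j ≤ seqDown md δ i := by
  intro i j hij
  induction j with
  | zero => simp_all
  | succ j ih =>
    rcases Nat.eq_or_lt_of_le hij with rfl | h
    · exact le_rfl
    · have h1 : seqDown md δ (j+1) ≤ seqDown md δ j := by
        have hp := seqDown_pos md hmd δ hδ j
        calc seqDown md δ (j+1) ≤ seqDown md δ j / 2 := min_le_left _ _
          _ ≤ seqDown md δ j := by linarith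
      exact h1.trans (ih (Nat.lt_succ_iff.mp h))

/-- for a semiflow with strong compact dynamics with strongness
witnessed by `ε₀`, for every `η ∈ (0, ε₀]` there is `ε > 0` such that every
shadow `ε`-chain starting in the global attractor `G` stays `η`-close to `G`. -/
theorem shadow_chain_stays_near_attractor (F : ℝ → X → X) (hF : IsSemiflow F)
    (G : Set X) (hG : IsGlobalAttractor F G) (ε₀ : ℝ) (hε₀ : 0 < ε₀)
    (hattr : Attracts F G (Metric.thickening ε₀ G))
    (hUC : UniformContinuousOn (fun p : ℝ × X => F p.1 p.2)
      (Set.Icc (0:ℝ) 1 ×ˢ Wset F ε₀ G))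
    (η : ℝ) (hη : η ∈ Set.Ioc 0 ε₀) :
    ∃ ε > (0:ℝ), ∀ (T : ℝ) (γ : ℝ → X) (x y : X),
      IsShadowChain F ε T γ x y → x ∈ G →
      ∀ t ∈ Set.Icc (0:ℝ) T, Metric.infDist (γ t) G < η := by
  classical
  obtain ⟨hη0, hηε₀⟩ := hη
  obtain ⟨hGcomp, hGinv, -, -⟩ := hG
  set W := Wset F ε₀ G with hWdef
  -- a modulus of uniform continuity
  have hmodex : ∀ α : ℝ, ∃ β : ℝ, 0 < β ∧ (0 < α → ∀ a ∈ W, ∀ b ∈ W, dist a b < β →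
      ∀ τ ∈ Set.Icc (0:ℝ) 1, dist (F τ a) (F τ b) < α) := by
    intro α
    rcases le_or_gt α 0 with h | h
    · exact ⟨1, one_pos, fun hα => absurd hα (not_lt.2 h)⟩
    · obtain ⟨β, hβ, hβ'⟩ := Metric.uniformContinuousOn_iff.1 hUC α h
      refine ⟨β, hβ, fun _ a ha b hb hab τ hτ => ?_⟩
      have := hβ' (τ, a) ⟨hτ, ha⟩ (τ, b) ⟨hτ, hb⟩ ?_
      · exact this
      · rw [Prod.dist_eq]
        simpa [dist_self] using max_lt hβ hab
  choose md hmdpos hmdspec using hmodex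
  set δ : ℝ := min (md (η/4)) ε₀ with hδdef
  have hδpos : 0 < δ := lt_min (hmdpos _) hε₀
  have hδε₀ : δ ≤ ε₀ := min_le_right _ _
  -- attraction time
  obtain ⟨T₀, hT₀pos, hT₀⟩ := hattr (δ/2) (half_pos hδpos)
  set n₀ : ℕ := max 1 ⌈T₀⌉₊ with hn₀def
  have hn₀1 : 1 ≤ n₀ := le_max_left _ _
  have hn₀T₀ : T₀ ≤ (n₀ : ℝ) := le_trans (Nat.le_ceil T₀) (by exact_mod_cast le_max_right 1 ⌈T₀⌉₊)
  set m : ℕ → ℝ := seqDown md δ with hmdef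
  have hmpos : ∀ j, 0 < m j := seqDown_pos md hmdpos δ hδpos
  have hmanti : ∀ {i j : ℕ}, i ≤ j → m j ≤ m i := fun h => seqDown_anti md hmdpos δ hδpos h
  have hm0 : m 0 = δ / 2 := rfl
  refine ⟨min (m n₀) (η/4), lt_min (hmpos _) (by linarith), ?_⟩
  set ε : ℝ := min (m n₀) (η/4) with hεdef
  have hεm : ε ≤ m n₀ := min_le_left _ _
  have hεη : ε ≤ η/4 := min_le_right _ _
  intro T γ x y hchain hxG t ht
  have hGne : G.Nonempty := ⟨x, hxG⟩
  obtain ⟨hT1, -, hγ0, -, hclose⟩ := hchain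
  -- basic membership facts
  have hthickW : Metric.thickening ε₀ G ⊆ W := by
    intro z hz
    exact Set.mem_biUnion Set.self_mem_Ici ⟨z, hz, hF.map_zero z⟩
  have hFW : ∀ (s : ℝ), 0 ≤ s → ∀ z ∈ Metric.thickening ε₀ G, F s z ∈ W :=
    fun s hs z hz => Set.mem_biUnion (hs : s ∈ Set.Ici (0:ℝ)) ⟨z, hz, rfl⟩
  have hinfthick : ∀ z : X, Metric.infDist z G < ε₀ → z ∈ Metric.thickening ε₀ G :=
    fun z hz => (Metric.mem_thickening_iff_infDist_lt hGne).2 hz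
  have hGthick : G ⊆ Metric.thickening ε₀ G := Metric.self_subset_thickening hε₀ G
  have hGW : ∀ g ∈ G, g ∈ W := fun g hg => hthickW (hGthick hg)
  have hFG : ∀ (s : ℝ), 0 ≤ s → ∀ g ∈ G, F s g ∈ G := by
    intro s hs g hg
    have := hGinv s hs
    rw [← this]
    exact ⟨g, hg, rfl⟩
  -- one chain step at integer times
  have hstep : ∀ i : ℕ, (i:ℝ) + 1 ≤ T → dist (γ ((i:ℝ) + 1)) (F 1 (γ (i:ℝ))) < ε := by
    intro i hi
    exact hclose 1 ⟨zero_le_one, le_rfl⟩ (i:ℝ) ⟨Nat.cast_nonneg i, by linarith⟩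
  -- Lemma A: tracking the true orbit for j ≤ n₀ steps
  have lemA : ∀ j : ℕ, 1 ≤ j → j ≤ n₀ → ∀ i : ℕ, (i:ℝ) + (j:ℝ) ≤ T →
      Metric.infDist (γ (i:ℝ)) G < ε₀ →
      (∀ l : ℕ, 1 ≤ l → l < j → Metric.infDist (γ ((i:ℝ) + (l:ℝ))) G < ε₀) →
      dist (γ ((i:ℝ) + (j:ℝ))) (F (j:ℝ) (γ (i:ℝ))) < m (n₀ - j) := by
    intro j
    induction j with
    | zero => omega
    | succ j ih =>
      intro h1 hn i hiT hi hint
      rcases Nat.eq_zero_or_pos j with rfl | hj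
      · -- base case j+1 = 1
        have h := hstep i (by push_cast at hiT ⊢; linarith)
        have : ε ≤ m (n₀ - 1) := hεm.trans (hmanti (Nat.sub_le _ _))
        push_cast
        exact lt_of_lt_of_le h this
      · -- inductive step
        have hjn : j ≤ n₀ := le_trans (Nat.le_succ j) hn
        have ihres := ih hj hjn i (by push_cast at hiT ⊢; linarith) hi
          (fun l hl hlj => hint l hl (Nat.lt_succ_of_lt hlj))
        have hajG : Metric.infDist (γ ((i:ℝ) + (j:ℝ))) G < ε₀ :=
          hint j hj (Nat.lt_succ_self j)
        have haW : γ ((i:ℝ) + (j:ℝ)) ∈ W := hthickW (hinfthick _ hajG)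
        have hbW : F (j:ℝ) (γ (i:ℝ)) ∈ W :=
          hFW (j:ℝ) (Nat.cast_nonneg j) _ (hinfthick _ hi)
        have hkey : n₀ - j = (n₀ - (j+1)) + 1 := by omega
        have hmj : m (n₀ - j) = min (m (n₀ - (j+1)) / 2) (md (m (n₀ - (j+1)) / 2)) := by
          rw [hkey]; rfl
        have hmd2 : m (n₀ - j) ≤ md (m (n₀ - (j+1)) / 2) := by rw [hmj]; exact min_le_right _ _
        have hα : (0:ℝ) < m (n₀ - (j+1)) / 2 := half_pos (hmpos _)
        have huc := hmdspec (m (n₀ - (j+1)) / 2) hα _ haW _ hbW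
          (lt_of_lt_of_le ihres hmd2) 1 ⟨zero_le_one, le_rfl⟩
        have hch := hstep (i + j) (by push_cast at hiT ⊢; linarith)
        have hcomp : F ((j:ℝ) + 1) (γ (i:ℝ)) = F 1 (F (j:ℝ) (γ (i:ℝ))) := by
          rw [add_comm]
          exact hF.map_add 1 (j:ℝ) zero_le_one (Nat.cast_nonneg j) _
        have hεhalf : ε ≤ m (n₀ - (j+1)) / 2 := by
          have h1 : m (n₀ - j) ≤ m (n₀ - (j+1)) / 2 := by rw [hmj]; exact min_le_left _ _
          exact hεm.trans ((hmanti (Nat.sub_le _ _)).trans h1)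
        have htri : dist (γ ((i:ℝ) + ((j:ℝ) + 1))) (F ((j:ℝ) + 1) (γ (i:ℝ))) ≤
            dist (γ (((i:ℝ) + (j:ℝ)) + 1)) (F 1 (γ ((i:ℝ) + (j:ℝ)))) +
            dist (F 1 (γ ((i:ℝ) + (j:ℝ)))) (F 1 (F (j:ℝ) (γ (i:ℝ)))) := by
          rw [hcomp, ← add_assoc]
          exact dist_triangle _ _ _
        have hchx : dist (γ (((i:ℝ) + (j:ℝ)) + 1)) (F 1 (γ ((i:ℝ) + (j:ℝ)))) < ε := by
          have := hch
          push_cast at this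
          exact this
        push_cast
        calc dist (γ ((i:ℝ) + ((j:ℝ) + 1))) (F ((j:ℝ) + 1) (γ (i:ℝ))) ≤ _ := htri
          _ < ε + m (n₀ - (j+1)) / 2 := add_lt_add hchx huc
          _ ≤ m (n₀ - (j+1)) := by linarith
  -- main claim at integer times
  have main : ∀ k : ℕ, (k:ℝ) ≤ T → Metric.infDist (γ (k:ℝ)) G < δ := by
    intro k
    induction k using Nat.strong_induction_on with
    | _ k IH =>
      intro hkT
      rcases Nat.eq_zero_or_pos k with rfl | hk
      · have : γ ((0:ℕ):ℝ) = x := by simpa using hγ0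
        rw [this, Metric.infDist_zero_of_mem hxG]
        exact hδpos
      have hIHl : ∀ l : ℕ, l < k → Metric.infDist (γ (l:ℝ)) G < ε₀ := by
        intro l hl
        have hlT : (l:ℝ) ≤ T := le_trans (by exact_mod_cast le_of_lt hl) hkT
        exact lt_of_lt_of_le (IH l hl hlT) hδε₀
      rcases le_or_gt k n₀ with hkn | hkn
      · -- small k: compare with the true orbit of x ∈ G
        have h0 : Metric.infDist (γ ((0:ℕ):ℝ)) G < ε₀ := by
          have : γ ((0:ℕ):ℝ) = x := by simpa using hγ0
          rw [this, Metric.infDist_zero_of_mem hxG]; exact hε₀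
        have hA := lemA k hk hkn 0 (by simpa using hkT) h0
          (fun l hl hlk => by simpa using hIHl l hlk)
        have hFkG : F (k:ℝ) (γ ((0:ℕ):ℝ)) ∈ G := by
          have hx0 : γ ((0:ℕ):ℝ) = x := by simpa using hγ0
          rw [hx0]
          exact hFG (k:ℝ) (Nat.cast_nonneg k) x hxG
        have := Metric.infDist_le_dist_of_mem (x := γ (((0:ℕ):ℝ) + (k:ℝ))) hFkG
        have hmk : m (n₀ - k) ≤ δ / 2 := by
          have := hmanti (Nat.zero_le (n₀ - k))
          rw [hm0] at this; exact this
        have : Metric.infDist (γ (((0:ℕ):ℝ) + (k:ℝ))) G < δ := by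
          calc Metric.infDist (γ (((0:ℕ):ℝ) + (k:ℝ))) G
              ≤ dist (γ (((0:ℕ):ℝ) + (k:ℝ))) (F (k:ℝ) (γ ((0:ℕ):ℝ))) :=
                Metric.infDist_le_dist_of_mem hFkG
            _ < m (n₀ - k) := hA
            _ ≤ δ / 2 := hmk
            _ < δ := by linarith
        simpa using this
      · -- large k: use attraction from k - n₀
        set i : ℕ := k - n₀ with hidef
        have hik : i < k := by omega
        have hiT : (i:ℝ) ≤ T := le_trans (by exact_mod_cast le_of_lt hik) hkT
        have hiδ : Metric.infDist (γ (i:ℝ)) G < δ := IH i hik hiT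
        have hiε₀ : Metric.infDist (γ (i:ℝ)) G < ε₀ := lt_of_lt_of_le hiδ hδε₀
        have hsum : i + n₀ = k := by omega
        have hsumT : (i:ℝ) + (n₀:ℝ) ≤ T := by
          have : ((i + n₀ : ℕ):ℝ) ≤ T := by rw [hsum]; exact hkT
          push_cast at this; linarith
        have hA := lemA n₀ hn₀1 le_rfl i hsumT hiε₀
          (fun l hl hln => by
            have hlk : i + l < k := by omega
            have : ((i + l : ℕ):ℝ) = (i:ℝ) + (l:ℝ) := by push_cast; ring
            rw [← this]
            exact hIHl (i + l) hlk)
        have hattr' : F (n₀:ℝ) (γ (i:ℝ)) ∈ Metric.thickening (δ/2) G := by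
          apply hT₀ (n₀:ℝ) hn₀T₀
          exact ⟨γ (i:ℝ), hinfthick _ hiε₀, rfl⟩
        have hbd : Metric.infDist (F (n₀:ℝ) (γ (i:ℝ))) G < δ/2 :=
          (Metric.mem_thickening_iff_infDist_lt hGne).1 hattr'
        have hmn : m (n₀ - n₀) = δ/2 := by simp [hm0]
        have : Metric.infDist (γ ((i:ℝ) + (n₀:ℝ))) G < δ := by
          calc Metric.infDist (γ ((i:ℝ) + (n₀:ℝ))) G
              ≤ Metric.infDist (F (n₀:ℝ) (γ (i:ℝ))) G +
                dist (γ ((i:ℝ) + (n₀:ℝ))) (F (n₀:ℝ) (γ (i:ℝ))) :=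
                Metric.infDist_le_infDist_add_dist
            _ < δ/2 + m (n₀ - n₀) := add_lt_add hbd hA
            _ = δ := by rw [hmn]; ring
        have hcast : (i:ℝ) + (n₀:ℝ) = (k:ℝ) := by
          rw [← hsum]; push_cast; ring
        rwa [hcast] at this
  -- conclude for arbitrary t ∈ [0, T]
  obtain ⟨ht0, htT⟩ := ht
  set k : ℕ := ⌊t⌋₊ with hkdef
  have hkt : (k:ℝ) ≤ t := Nat.floor_le ht0
  have htk1 : t < (k:ℝ) + 1 := Nat.lt_floor_add_one t
  have hτmem : t - (k:ℝ) ∈ Set.Icc (0:ℝ) 1 := ⟨by linarith, by linarith⟩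
  have hδk := main k (le_trans hkt htT)
  obtain ⟨g, hgG, hgd⟩ := (Metric.infDist_lt_iff hGne).1 hδk
  have h1 : dist (γ t) (F (t - (k:ℝ)) (γ (k:ℝ))) < ε := by
    have := hclose (t - (k:ℝ)) hτmem (k:ℝ) ⟨Nat.cast_nonneg k, by linarith⟩
    simpa using this
  have hγkW : γ (k:ℝ) ∈ W := hthickW (hinfthick _ (lt_of_lt_of_le hδk hδε₀))
  have hgW : g ∈ W := hGW g hgG
  have hgδ : dist (γ (k:ℝ)) g < md (η/4) := lt_of_lt_of_le hgd (min_le_left _ _)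
  have h2 : dist (F (t - (k:ℝ)) (γ (k:ℝ))) (F (t - (k:ℝ)) g) < η/4 :=
    hmdspec (η/4) (by linarith) _ hγkW _ hgW hgδ (t - (k:ℝ)) hτmem
  have h3 : F (t - (k:ℝ)) g ∈ G := hFG (t - (k:ℝ)) (by linarith) g hgG
  calc Metric.infDist (γ t) G ≤ dist (γ t) (F (t - (k:ℝ)) g) :=
        Metric.infDist_le_dist_of_mem h3
    _ ≤ dist (γ t) (F (t - (k:ℝ)) (γ (k:ℝ))) + dist (F (t - (k:ℝ)) (γ (k:ℝ))) (F (t - (k:ℝ)) g) :=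
        dist_triangle _ _ _
    _ < ε + η/4 := add_lt_add h1 h2
    _ ≤ η/4 + η/4 := by linarith
    _ < η := by linarith
end

section
/- Let F be a semiflow with strong compact dynamics on a metric space (X,d) and let 𝒢 denote its (strong) global attractor. If x ∈ 𝒢 and x ≽_S y, then y ∈ 𝒢. That is, the global attractor is forward-closed under the shadow downstream relation. -/
open Set Metric Filter

variable {X : Type*} [MetricSpace X]

/-- the global attractor of a semiflow with strong compact
dynamics is forward-closed under the shadow downstream relation `≽_S`. -/
theorem attractor_closed_under_shadowLe (F : ℝ → X → X) (hF : IsSemiflow F)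
    (G : Set X) (hG : IsStrongGlobalAttractor F G) {x y : X}
    (hx : x ∈ G) (hxy : ShadowLe F x y) : y ∈ G := by
  obtain ⟨⟨hGc, hGinv, -, -⟩, ε0, hε0, hattr, hUC⟩ := hG
  have hGclosed : IsClosed G := hGc.isClosed
  rw [← hGclosed.closure_eq, Metric.mem_closure_iff]
  intro δ hδ
  rw [Metric.uniformContinuousOn_iff] at hUC
  -- basic membership facts for `W := Wset F ε0 G`
  have hmemW : ∀ z g : X, g ∈ G → dist z g < ε0 → z ∈ Wset F ε0 G := by
    intro z g hg hd
    have hz : z ∈ Metric.thickening ε0 G := Metric.mem_thickening_iff.2 ⟨g, hg, hd⟩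
    exact Set.mem_iUnion₂.2 ⟨0, Set.mem_Ici.2 le_rfl, z, hz, hF.map_zero z⟩
  have hGW : ∀ g : X, g ∈ G → g ∈ Wset F ε0 G := fun g hg =>
    hmemW g g hg (by simpa using hε0)
  have hginv : ∀ t : ℝ, 0 ≤ t → ∀ g ∈ G, F t g ∈ G := by
    intro t ht g hg
    rw [← hGinv t ht]; exact ⟨g, hg, rfl⟩
  -- a quantitative uniform-continuity step
  have step : ∀ a : {r : ℝ // 0 < r}, ∃ b : {r : ℝ // 0 < r}, (b : ℝ) ≤ (a : ℝ) / 2 ∧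
      ∀ τ ∈ Set.Icc (0:ℝ) 1, ∀ p ∈ Wset F ε0 G, ∀ q ∈ Wset F ε0 G,
        dist p q < (b : ℝ) → dist (F τ p) (F τ q) < (a : ℝ) / 2 := by
    rintro ⟨a, ha⟩
    obtain ⟨β, hβ, hb⟩ := hUC (a / 2) (by positivity)
    refine ⟨⟨min β (a / 2), lt_min hβ (by positivity)⟩, min_le_right _ _, ?_⟩
    intro τ hτ p hp q hq hpq
    have h1 : ((τ, p) : ℝ × X) ∈ Set.Icc (0:ℝ) 1 ×ˢ Wset F ε0 G := Set.mk_mem_prod hτ hp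
    have h2 : ((τ, q) : ℝ × X) ∈ Set.Icc (0:ℝ) 1 ×ˢ Wset F ε0 G := Set.mk_mem_prod hτ hq
    have hd : dist ((τ, p) : ℝ × X) ((τ, q) : ℝ × X) < β := by
      rw [Prod.dist_eq]
      simp only [dist_self]
      rw [max_eq_right dist_nonneg]
      exact lt_of_lt_of_le hpq (min_le_left _ _)
    exact hb (τ, p) h1 (τ, q) h2 hd
  choose gfun hg1 hg2 using step
  -- iterated error sequences
  have seq : ∀ a : ℝ, 0 < a → ∃ e : ℕ → ℝ, e 0 = a ∧ (∀ k, 0 < e k) ∧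
      (∀ k, e (k + 1) ≤ e k / 2) ∧
      (∀ k, ∀ τ ∈ Set.Icc (0:ℝ) 1, ∀ p ∈ Wset F ε0 G, ∀ q ∈ Wset F ε0 G,
        dist p q < e (k + 1) → dist (F τ p) (F τ q) < e k / 2) := by
    intro a ha
    refine ⟨fun k => ((gfun^[k] ⟨a, ha⟩ : {r : ℝ // 0 < r}) : ℝ), rfl,
      fun k => (gfun^[k] ⟨a, ha⟩).2, ?_, ?_⟩
    · intro k
      simp only [Function.iterate_succ_apply']
      exact hg1 _
    · intro k τ hτ p hp q hq hpq
      simp only [Function.iterate_succ_apply'] at hpq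
      exact hg2 _ τ hτ p hp q hq hpq
  -- Stage A: points starting close to G have orbits staying η-close to G
  have stageA : ∀ η : ℝ, 0 < η → η ≤ ε0 → ∃ σ : ℝ, 0 < σ ∧ σ ≤ η / 2 ∧
      ∀ z g : X, g ∈ G → dist z g < σ → ∀ t : ℝ, 0 ≤ t →
        ∃ g' ∈ G, dist (F t z) g' < η := by
    intro η hη hηε0
    obtain ⟨T1, hT1pos, hT1⟩ := hattr (η / 2) (by positivity)
    obtain ⟨e, he0, hepos, hehalf, heUC⟩ := seq (η / 2) (by positivity)
    have hemono : ∀ {k m : ℕ}, k ≤ m → e m ≤ e k := by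
      intro k m h
      exact antitone_nat_of_succ_le (fun i => le_trans (hehalf i) (by linarith [hepos i])) h
    have hetop : ∀ k, e k ≤ η / 2 := fun k => he0 ▸ hemono (Nat.zero_le k)
    set n1 := ⌈T1⌉₊ with hn1def
    refine ⟨e n1, hepos n1, hetop n1, ?_⟩
    intro z g hg hzg t ht
    have key : ∀ j : ℕ, j ≤ n1 → dist (F (j : ℝ) z) (F (j : ℝ) g) < e (n1 - j) := by
      intro j
      induction j with
      | zero =>
        intro _
        simpa [hF.map_zero] using hzg
      | succ j ih =>
        intro hj1
        have hj : j ≤ n1 := Nat.le_of_succ_le hj1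
        have IH := ih hj
        have hFg : F (j : ℝ) g ∈ G := hginv _ (Nat.cast_nonneg j) g hg
        have hqW : F (j : ℝ) g ∈ Wset F ε0 G := hGW _ hFg
        have hpW : F (j : ℝ) z ∈ Wset F ε0 G :=
          hmemW _ _ hFg (lt_of_lt_of_le IH (le_trans (hetop _) (by linarith)))
        have hnj : n1 - j = (n1 - (j + 1)) + 1 := by omega
        have hstep := heUC (n1 - (j + 1)) 1 ⟨zero_le_one, le_rfl⟩ _ hpW _ hqW
          (by rw [← hnj]; exact IH)
        have hc1 : F ((j : ℝ) + 1) z = F 1 (F (j : ℝ) z) := by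
          rw [show (j : ℝ) + 1 = 1 + (j : ℝ) by ring,
            hF.map_add 1 j zero_le_one (Nat.cast_nonneg j)]
        have hc2 : F ((j : ℝ) + 1) g = F 1 (F (j : ℝ) g) := by
          rw [show (j : ℝ) + 1 = 1 + (j : ℝ) by ring,
            hF.map_add 1 j zero_le_one (Nat.cast_nonneg j)]
        have hcast : ((j + 1 : ℕ) : ℝ) = (j : ℝ) + 1 := by push_cast; ring
        rw [hcast, hc1, hc2]
        calc dist (F 1 (F (j : ℝ) z)) (F 1 (F (j : ℝ) g)) < e (n1 - (j + 1)) / 2 := hstep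
          _ ≤ e (n1 - (j + 1)) := by linarith [hepos (n1 - (j + 1))]
    rcases le_or_gt T1 t with hT1t | htT1
    · have hzT : z ∈ Metric.thickening ε0 G :=
        Metric.mem_thickening_iff.2 ⟨g, hg,
          lt_of_lt_of_le hzg (le_trans (hetop n1) (by linarith))⟩
      have hFt : F t z ∈ Metric.thickening (η / 2) G := hT1 t hT1t ⟨z, hzT, rfl⟩
      obtain ⟨g', hg', hd'⟩ := Metric.mem_thickening_iff.1 hFt
      exact ⟨g', hg', lt_of_lt_of_le hd' (by linarith)⟩
    · set j := ⌊t⌋₊ with hjdef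
      have hjt : (j : ℝ) ≤ t := Nat.floor_le ht
      have htj1 : t < (j : ℝ) + 1 := Nat.lt_floor_add_one t
      have hjn1 : j + 1 ≤ n1 := by
        have : j < n1 := (Nat.floor_lt ht).2 (lt_of_lt_of_le htT1 (Nat.le_ceil T1))
        omega
      have hkey := key j (by omega)
      have hFg : F (j : ℝ) g ∈ G := hginv _ (Nat.cast_nonneg j) g hg
      have hqW : F (j : ℝ) g ∈ Wset F ε0 G := hGW _ hFg
      have hpW : F (j : ℝ) z ∈ Wset F ε0 G :=
        hmemW _ _ hFg (lt_of_lt_of_le hkey (le_trans (hetop _) (by linarith)))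
      have hnj : n1 - j = (n1 - (j + 1)) + 1 := by omega
      set τ := t - (j : ℝ) with hτdef
      have hτ0 : 0 ≤ τ := by rw [hτdef]; linarith
      have hτ1 : τ ≤ 1 := by rw [hτdef]; linarith
      have hstep := heUC (n1 - (j + 1)) τ ⟨hτ0, hτ1⟩ _ hpW _ hqW
        (by rw [← hnj]; exact hkey)
      have hτj : τ + (j : ℝ) = t := by rw [hτdef]; ring
      have hc1 : F t z = F τ (F (j : ℝ) z) := by
        rw [← hτj, hF.map_add τ j hτ0 (Nat.cast_nonneg j)]
      have hc2 : F t g = F τ (F (j : ℝ) g) := by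
        rw [← hτj, hF.map_add τ j hτ0 (Nat.cast_nonneg j)]
      refine ⟨F t g, hginv t ht g hg, ?_⟩
      rw [hc1, hc2]
      exact lt_of_lt_of_le hstep (by linarith [hetop (n1 - (j + 1))])
  -- Stage B: traverse the shadow chain
  have hηpos : 0 < min δ ε0 / 2 := by
    have h1 : 0 < min δ ε0 := lt_min hδ hε0
    linarith
  set η := min δ ε0 / 2 with hηdef
  have hηδ : η ≤ δ / 2 := by
    rw [hηdef]; linarith [min_le_left δ ε0]
  have hηε0 : η ≤ ε0 / 2 := by
    rw [hηdef]; linarith [min_le_right δ ε0]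
  obtain ⟨σ, hσ, hση, hσkey⟩ := stageA η hηpos (by linarith)
  obtain ⟨T2, hT2pos, hT2⟩ := hattr (σ / 4) (by positivity)
  set n := ⌈T2⌉₊ with hndef
  have hTn : T2 ≤ (n : ℝ) := Nat.le_ceil T2
  have hn0 : 0 < n := Nat.ceil_pos.2 hT2pos
  obtain ⟨d, hd0, hdpos, hdhalf, hdUC⟩ := seq (σ / 4) (by positivity)
  have hdmono : ∀ {k m : ℕ}, k ≤ m → d m ≤ d k := by
    intro k m h
    exact antitone_nat_of_succ_le (fun i => le_trans (hdhalf i) (by linarith [hdpos i])) h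
  have hdtop : ∀ k, d k ≤ σ / 4 := fun k => hd0 ▸ hdmono (Nat.zero_le k)
  obtain ⟨T, γ, hT1le, hpc, hγ0, hγT, hclose⟩ := hxy (d n) (hdpos n)
  -- within-block error propagation
  have block : ∀ s : ℝ, 0 ≤ s → ∀ g ∈ G, dist (γ s) g < σ →
      ∀ j : ℕ, j ≤ n → s + (j : ℝ) ≤ T →
        dist (γ (s + (j : ℝ))) (F (j : ℝ) (γ s)) < d (n - j) := by
    intro s hs g hg hgd j
    induction j with
    | zero =>
      intro _ _
      simpa [hF.map_zero] using hdpos (n - 0)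
    | succ j ih =>
      intro hj1 hsT
      have hcast : ((j + 1 : ℕ) : ℝ) = (j : ℝ) + 1 := by push_cast; ring
      rw [hcast] at hsT ⊢
      have hj : j ≤ n := Nat.le_of_succ_le hj1
      have hsjT : s + (j : ℝ) ≤ T := by linarith
      have IH := ih hj hsjT
      have hch := hclose 1 ⟨zero_le_one, le_rfl⟩ (s + (j : ℝ))
        ⟨add_nonneg hs (Nat.cast_nonneg j), by linarith⟩
      obtain ⟨g', hg', hORB⟩ := hσkey (γ s) g hg hgd (j : ℝ) (Nat.cast_nonneg j)
      have hqW : F (j : ℝ) (γ s) ∈ Wset F ε0 G := hmemW _ _ hg' (by linarith)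
      have hpW : γ (s + (j : ℝ)) ∈ Wset F ε0 G := by
        apply hmemW _ _ hg'
        calc dist (γ (s + (j : ℝ))) g'
            ≤ dist (γ (s + (j : ℝ))) (F (j : ℝ) (γ s)) + dist (F (j : ℝ) (γ s)) g' :=
              dist_triangle _ _ _
          _ < d (n - j) + η := add_lt_add IH hORB
          _ ≤ σ / 4 + η := by linarith [hdtop (n - j)]
          _ ≤ ε0 := by linarith
      have hnj : n - j = (n - (j + 1)) + 1 := by omega
      have hstep := hdUC (n - (j + 1)) 1 ⟨zero_le_one, le_rfl⟩ _ hpW _ hqW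
        (by rw [← hnj]; exact IH)
      have hc : F ((j : ℝ) + 1) (γ s) = F 1 (F (j : ℝ) (γ s)) := by
        rw [show (j : ℝ) + 1 = 1 + (j : ℝ) by ring,
          hF.map_add 1 j zero_le_one (Nat.cast_nonneg j)]
      have hεd : d n ≤ d (n - (j + 1)) / 2 := by
        have h1 : d n ≤ d (n - j) := hdmono (Nat.sub_le n j)
        have h2 : d (n - j) ≤ d (n - (j + 1)) / 2 := by rw [hnj]; exact hdhalf _
        linarith
      rw [hc]
      calc dist (γ (s + ((j : ℝ) + 1))) (F 1 (F (j : ℝ) (γ s)))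
          ≤ dist (γ (s + (j : ℝ) + 1)) (F 1 (γ (s + (j : ℝ)))) +
            dist (F 1 (γ (s + (j : ℝ)))) (F 1 (F (j : ℝ) (γ s))) := by
            rw [show s + ((j : ℝ) + 1) = s + (j : ℝ) + 1 by ring]
            exact dist_triangle _ _ _
        _ < d n + d (n - (j + 1)) / 2 := add_lt_add hch hstep
        _ ≤ d (n - (j + 1)) / 2 + d (n - (j + 1)) / 2 := by linarith
        _ = d (n - (j + 1)) := by ring
  -- block starts stay σ-close to G
  have claimC : ∀ k : ℕ, ((k * n : ℕ) : ℝ) ≤ T →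
      ∃ g ∈ G, dist (γ ((k * n : ℕ) : ℝ)) g < σ := by
    intro k
    induction k with
    | zero =>
      intro _
      refine ⟨x, hx, ?_⟩
      simpa [hγ0] using hσ
    | succ k ih =>
      intro hk1
      have hmono : ((k * n : ℕ) : ℝ) ≤ (((k + 1) * n : ℕ) : ℝ) := by
        exact_mod_cast Nat.mul_le_mul_right n (Nat.le_succ k)
      have hkT : ((k * n : ℕ) : ℝ) ≤ T := le_trans hmono hk1
      obtain ⟨g, hg, hgd⟩ := ih hkT
      have hsum : ((k * n : ℕ) : ℝ) + (n : ℝ) = (((k + 1) * n : ℕ) : ℝ) := by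
        push_cast; ring
      have hb := block ((k * n : ℕ) : ℝ) (Nat.cast_nonneg _) g hg hgd n le_rfl
        (by rw [hsum]; exact hk1)
      have hb' : dist (γ (((k + 1) * n : ℕ) : ℝ)) (F (n : ℝ) (γ ((k * n : ℕ) : ℝ))) < σ / 4 := by
        rw [← hsum]
        simpa [Nat.sub_self, hd0] using hb
      have hzT : γ ((k * n : ℕ) : ℝ) ∈ Metric.thickening ε0 G :=
        Metric.mem_thickening_iff.2 ⟨g, hg, by linarith⟩
      have hFn : F (n : ℝ) (γ ((k * n : ℕ) : ℝ)) ∈ Metric.thickening (σ / 4) G :=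
        hT2 (n : ℝ) hTn ⟨_, hzT, rfl⟩
      obtain ⟨g', hg', hd'⟩ := Metric.mem_thickening_iff.1 hFn
      refine ⟨g', hg', ?_⟩
      calc dist (γ (((k + 1) * n : ℕ) : ℝ)) g'
          ≤ dist (γ (((k + 1) * n : ℕ) : ℝ)) (F (n : ℝ) (γ ((k * n : ℕ) : ℝ))) +
            dist (F (n : ℝ) (γ ((k * n : ℕ) : ℝ))) g' := dist_triangle _ _ _
        _ < σ / 4 + σ / 4 := add_lt_add hb' hd'
        _ < σ := by linarith
  -- final assembly
  have hT0 : (0 : ℝ) ≤ T := le_trans zero_le_one hT1le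
  have hnR : (0 : ℝ) < (n : ℝ) := by exact_mod_cast hn0
  set K := ⌊T / (n : ℝ)⌋₊ with hKdef
  have hKle : ((K * n : ℕ) : ℝ) ≤ T := by
    have h1 : (K : ℝ) ≤ T / (n : ℝ) := Nat.floor_le (div_nonneg hT0 hnR.le)
    have h2 : (K : ℝ) * (n : ℝ) ≤ (T / (n : ℝ)) * (n : ℝ) := by nlinarith
    rw [div_mul_cancel₀ T hnR.ne'] at h2
    push_cast
    exact h2
  obtain ⟨g, hg, hgd⟩ := claimC K hKle
  set s : ℝ := ((K * n : ℕ) : ℝ) with hsdef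
  have hs0 : 0 ≤ s := Nat.cast_nonneg _
  have hLn : T - s < (n : ℝ) := by
    have h1 : T / (n : ℝ) < (K : ℝ) + 1 := Nat.lt_floor_add_one _
    have h2 : T < ((K : ℝ) + 1) * (n : ℝ) := by
      calc T = (T / (n : ℝ)) * (n : ℝ) := (div_mul_cancel₀ T hnR.ne').symm
        _ < ((K : ℝ) + 1) * (n : ℝ) := by nlinarith
    rw [hsdef]
    push_cast
    nlinarith
  have hL0 : 0 ≤ T - s := by linarith
  set m := ⌊T - s⌋₊ with hmdef
  have hmL : (m : ℝ) ≤ T - s := Nat.floor_le hL0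
  have hmn : m < n := (Nat.floor_lt hL0).2 hLn
  set τ := T - s - (m : ℝ) with hτdef
  have hτ0 : 0 ≤ τ := by rw [hτdef]; linarith
  have hτ1 : τ ≤ 1 := by
    have := Nat.lt_floor_add_one (T - s)
    rw [hτdef]; linarith
  have hsmT : s + (m : ℝ) ≤ T := by linarith
  have hb := block s hs0 g hg hgd m hmn.le hsmT
  have hch := hclose τ ⟨hτ0, hτ1⟩ (s + (m : ℝ))
    ⟨add_nonneg hs0 (Nat.cast_nonneg m), by rw [hτdef]; linarith⟩
  obtain ⟨g', hg', hORB⟩ := hσkey (γ s) g hg hgd (m : ℝ) (Nat.cast_nonneg m)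
  have hqW : F (m : ℝ) (γ s) ∈ Wset F ε0 G := hmemW _ _ hg' (by linarith)
  have hpW : γ (s + (m : ℝ)) ∈ Wset F ε0 G := by
    apply hmemW _ _ hg'
    calc dist (γ (s + (m : ℝ))) g'
        ≤ dist (γ (s + (m : ℝ))) (F (m : ℝ) (γ s)) + dist (F (m : ℝ) (γ s)) g' :=
          dist_triangle _ _ _
      _ < d (n - m) + η := add_lt_add hb hORB
      _ ≤ ε0 := by linarith [hdtop (n - m)]
  have hnm : n - m = (n - (m + 1)) + 1 := by omega
  have hstep := hdUC (n - (m + 1)) τ ⟨hτ0, hτ1⟩ _ hpW _ hqW (by rw [← hnm]; exact hb)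
  have hcomp : F τ (F (m : ℝ) (γ s)) = F (τ + (m : ℝ)) (γ s) :=
    (hF.map_add τ m hτ0 (Nat.cast_nonneg m) (γ s)).symm
  obtain ⟨g'', hg'', hd''⟩ := hσkey (γ s) g hg hgd (τ + (m : ℝ))
    (add_nonneg hτ0 (Nat.cast_nonneg m))
  refine ⟨g'', hg'', ?_⟩
  have hyT : y = γ (s + (m : ℝ) + τ) := by
    rw [← hγT]; congr 1; rw [hτdef]; ring
  have hεd : d n ≤ d (n - (m + 1)) / 2 := by
    have h1 : d n ≤ d (n - m) := hdmono (Nat.sub_le n m)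
    have h2 : d (n - m) ≤ d (n - (m + 1)) / 2 := by rw [hnm]; exact hdhalf _
    linarith
  have h3 : dist (F τ (γ (s + (m : ℝ)))) (F τ (F (m : ℝ) (γ s))) < d (n - (m + 1)) / 2 := hstep
  have h4 : dist (F τ (F (m : ℝ) (γ s))) g'' < η := by rw [hcomp]; exact hd''
  calc dist y g'' = dist (γ (s + (m : ℝ) + τ)) g'' := by rw [hyT]
    _ ≤ dist (γ (s + (m : ℝ) + τ)) (F τ (γ (s + (m : ℝ)))) +
        dist (F τ (γ (s + (m : ℝ)))) (F τ (F (m : ℝ) (γ s))) +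
        dist (F τ (F (m : ℝ) (γ s))) g'' := dist_triangle4 _ _ _ _
    _ < d n + d (n - (m + 1)) / 2 + η := by
        exact add_lt_add (add_lt_add hch h3) h4
    _ ≤ d (n - (m + 1)) + η := by linarith
    _ ≤ σ / 4 + η := by linarith [hdtop (n - (m + 1))]
    _ < δ := by linarith
end

section
/- Let F be a semiflow on a compact metric space (X,d) and let x, y ∈ X. If x ≽_C y, then x ≽_S y. That is, if for every ε > 0 and T > 0 there exists an (ε,T)-chain from x to y, then for every ε > 0 there exists an ε-chain (shadow chain) from x to y. -/
open Set Metric Filter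

variable {X : Type*} [MetricSpace X]

-- Auxiliary definitions/lemmas for conleyLe_imp_shadowLe

/-- Index of the interval `[s i, s (i+1))` containing `u`. -/
noncomputable def sidx (s : ℕ → ℝ) (N : ℕ) (u : ℝ) : ℕ :=
  @Nat.findGreatest (fun i => s i ≤ u) (Classical.decPred _) N

lemma sidx_spec {s : ℕ → ℝ} {N : ℕ} {u : ℝ} (hs0 : s 0 = 0)
    (hu0 : 0 ≤ u) (huN : u < s N) :
    sidx s N u < N ∧ s (sidx s N u) ≤ u ∧ u < s (sidx s N u + 1) := by
  classical
  have hP0 : s 0 ≤ u := by rw [hs0]; exact hu0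
  have hle : s (sidx s N u) ≤ u :=
    Nat.findGreatest_spec (P := fun i => s i ≤ u) (Nat.zero_le N) hP0
  have hbd : sidx s N u ≤ N := Nat.findGreatest_le N
  have hlt : sidx s N u < N := by
    rcases hbd.lt_or_eq with h | h
    · exact h
    · exact absurd (h ▸ hle) (not_le.2 huN)
  refine ⟨hlt, hle, ?_⟩
  have := Nat.findGreatest_is_greatest (P := fun i => s i ≤ u)
    (n := N) (k := sidx s N u + 1) (Nat.lt_succ_self _) hlt
  exact not_le.1 this

lemma sidx_eq {s : ℕ → ℝ} (hsmono : StrictMono s) {N i : ℕ} {u : ℝ}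
    (hiN : i ≤ N) (h1 : s i ≤ u) (h2 : u < s (i + 1)) : sidx s N u = i := by
  classical
  have hge : i ≤ sidx s N u := Nat.le_findGreatest hiN h1
  have hle : sidx s N u ≤ i := by
    by_contra hcon
    push_neg at hcon
    have h3 : s (i + 1) ≤ s (sidx s N u) := hsmono.monotone hcon
    have h4 : s (sidx s N u) ≤ u := by
      have h0 : 0 < sidx s N u := lt_of_le_of_lt (Nat.zero_le i) hcon
      exact Nat.findGreatest_of_ne_zero (P := fun i => s i ≤ u) rfl h0.ne'
    linarith
  exact le_antisymm hle hge

lemma exists_interval_left {s : ℕ → ℝ} {N : ℕ} {t : ℝ} (hs0 : s 0 = 0)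
    (ht0 : 0 < t) (htN : t ≤ s N) : ∃ i < N, s i < t ∧ t ≤ s (i + 1) := by
  classical
  have hP0 : s 0 < t := by rw [hs0]; exact ht0
  have hlt : s (Nat.findGreatest (fun i => s i < t) N) < t :=
    Nat.findGreatest_spec (P := fun i => s i < t) (Nat.zero_le N) hP0
  set i := Nat.findGreatest (fun i => s i < t) N with hi
  have hbd : i ≤ N := Nat.findGreatest_le N
  have hiN : i < N := by
    rcases hbd.lt_or_eq with h | h
    · exact h
    · exact absurd (h ▸ hlt) (not_lt.2 htN)
  refine ⟨i, hiN, hlt, ?_⟩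
  have := Nat.findGreatest_is_greatest (P := fun i => s i < t)
    (n := N) (k := i + 1) (Nat.lt_succ_self _) hiN
  exact not_lt.1 this

lemma IsSemiflow.cont_piece {X : Type*} [MetricSpace X] {F : ℝ → X → X}
    (hF : IsSemiflow F) (a : ℝ) (b : X) :
    ContinuousOn (fun u : ℝ => F (u - a) b) (Set.Ici a) := by
  have h1 : ContinuousOn (fun u : ℝ => ((u - a, b) : ℝ × X)) (Set.Ici a) :=
    Continuous.continuousOn (by fun_prop)
  refine hF.cont.comp h1 fun u hu => ?_
  exact ⟨by simpa [sub_nonneg] using hu, Set.mem_univ _⟩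

/-- on a compact metric space, `x ≽_C y` implies `x ≽_S y`. -/
theorem conleyLe_imp_shadowLe [CompactSpace X] (F : ℝ → X → X) (hF : IsSemiflow F)
    {x y : X} (h : ConleyLe F x y) : ShadowLe F x y := by
  classical
  intro ε hε
  -- uniform continuity of F on [0,1] × X
  obtain ⟨δ, hδ, hδ'⟩ : ∃ δ > (0:ℝ), ∀ σ ∈ Set.Icc (0:ℝ) 1, ∀ p q : X,
      dist p q < δ → dist (F σ p) (F σ q) < ε := by
    have hK : IsCompact ((Set.Icc (0:ℝ) 1) ×ˢ (Set.univ : Set X)) :=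
      isCompact_Icc.prod isCompact_univ
    have hc : ContinuousOn (fun p : ℝ × X => F p.1 p.2) ((Set.Icc (0:ℝ) 1) ×ˢ Set.univ) :=
      hF.cont.mono (Set.prod_mono_left Set.Icc_subset_Ici_self)
    have hu := hK.uniformContinuousOn_of_continuous hc
    rw [Metric.uniformContinuousOn_iff] at hu
    obtain ⟨δ, hδ, H⟩ := hu ε hε
    refine ⟨δ, hδ, fun σ hσ p q hpq => ?_⟩
    refine H (σ, p) (by simp [hσ]) (σ, q) (by simp [hσ]) ?_
    rw [Prod.dist_eq]
    exact max_lt (by rw [dist_self]; exact hδ) hpq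
  set ε₀ := min δ ε with hε₀def
  have hε₀ : 0 < ε₀ := lt_min hδ hε
  obtain ⟨N, c, t, hN, hc0, hcN, hstep⟩ := h ε₀ hε₀ 2 two_pos
  set t' : ℕ → ℝ := fun i => if i < N then t i else 2 with ht'def
  have ht2 : ∀ i, 2 ≤ t' i := by
    intro i
    simp only [ht'def]
    split_ifs with hi
    · exact (hstep i hi).1
    · exact le_refl 2
  have ht'eq : ∀ i < N, t' i = t i := by
    intro i hi; simp [ht'def, hi]
  set s : ℕ → ℝ := fun n => ∑ i ∈ Finset.range n, t' i with hsdef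
  have hs0 : s 0 = 0 := by simp [hsdef]
  have hssucc : ∀ n, s (n + 1) = s n + t' n := by
    intro n; simp [hsdef, Finset.sum_range_succ]
  have hs2 : ∀ n, s n + 2 ≤ s (n + 1) := by
    intro n; rw [hssucc n]; linarith [ht2 n]
  have hsmono : StrictMono s := strictMono_nat_of_lt_succ fun n => by linarith [hs2 n]
  have hsnonneg : ∀ n, 0 ≤ s n := by
    intro n
    have := hsmono.monotone (Nat.zero_le n)
    rw [hs0] at this; exact this
  have hsN : 2 ≤ s N := by
    have h1 : s 1 ≤ s N := hsmono.monotone hN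
    have : s 1 = t' 0 := by rw [hssucc 0, hs0]; ring
    linarith [ht2 0]
  -- the shadow curve
  set γ : ℝ → X := fun u => if u < s N then F (u - s (sidx s N u)) (c (sidx s N u)) else c N
    with hγdef
  have hγ_eq : ∀ (u : ℝ) (i : ℕ), i < N → s i ≤ u → u < s (i + 1) →
      γ u = F (u - s i) (c i) := by
    intro u i hi h1 h2
    have huN : u < s N := lt_of_lt_of_le h2 (hsmono.monotone hi)
    have : sidx s N u = i := sidx_eq hsmono hi.le h1 h2
    simp only [hγdef, if_pos huN, this]
  have hγT : ∀ u, s N ≤ u → γ u = c N := by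
    intro u hu
    simp only [hγdef, if_neg (not_lt.2 hu)]
  refine ⟨s N, γ, by linarith, ?_, ?_, ?_, ?_⟩
  · -- piecewise continuity
    refine ⟨⟨(Finset.range (N + 1)).image s, ?_⟩, ?_, ?_⟩
    · -- continuity off the jump set
      intro u hu hS
      have hne : ∀ j ≤ N, s j ≠ u := by
        intro j hj hcon
        exact hS (Finset.mem_image.2 ⟨j, Finset.mem_range.2 (Nat.lt_succ_of_le hj), hcon⟩)
      have huN : u < s N := lt_of_le_of_ne hu.2 fun hcon => hne N le_rfl hcon.symm
      obtain ⟨hiN, h1, h2⟩ := sidx_spec hs0 hu.1 huN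
      set i := sidx s N u
      have h1' : s i < u := lt_of_le_of_ne h1 (hne i hiN.le)
      have hev : γ =ᶠ[nhds u] fun v => F (v - s i) (c i) := by
        filter_upwards [Ioo_mem_nhds h1' h2] with v hv
        exact hγ_eq v i hiN hv.1.le hv.2
      have hca : ContinuousAt (fun v => F (v - s i) (c i)) u :=
        (hF.cont_piece (s i) (c i)).continuousAt (Ici_mem_nhds h1')
      exact (hca.congr hev.symm).continuousWithinAt
    · -- left limits
      intro u hu
      obtain ⟨i, hiN, h1, h2⟩ := exists_interval_left hs0 hu.1 hu.2
      refine ⟨F (u - s i) (c i), ?_⟩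
      have hca : ContinuousAt (fun v => F (v - s i) (c i)) u :=
        (hF.cont_piece (s i) (c i)).continuousAt (Ici_mem_nhds h1)
      refine (hca.tendsto.mono_left nhdsWithin_le_nhds).congr' ?_
      filter_upwards [self_mem_nhdsWithin, nhdsWithin_le_nhds (Ioi_mem_nhds h1)] with v hv1 hv2
      exact (hγ_eq v i hiN hv2.le (lt_of_lt_of_le hv1 h2)).symm
    · -- right limits
      intro u hu
      obtain ⟨hiN, h1, h2⟩ := sidx_spec hs0 hu.1 hu.2
      set i := sidx s N u
      refine ⟨F (u - s i) (c i), ?_⟩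
      have hcw : ContinuousWithinAt (fun v => F (v - s i) (c i)) (Set.Ici (s i)) u :=
        hF.cont_piece (s i) (c i) u h1
      have hmono : nhdsWithin u (Set.Ioi u) ≤ nhdsWithin u (Set.Ici (s i)) :=
        nhdsWithin_mono u fun v hv => le_trans h1 (le_of_lt hv)
      refine (hcw.tendsto.mono_left hmono).congr' ?_
      filter_upwards [self_mem_nhdsWithin, nhdsWithin_le_nhds (Iio_mem_nhds h2)] with v hv1 hv2
      exact (hγ_eq v i hiN (le_trans h1 (le_of_lt hv1)) hv2).symm
  · -- γ 0 = x
    have h1 : (0:ℝ) < s 1 := by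
      have := hs2 0; rw [hs0] at this; linarith
    rw [hγ_eq 0 0 hN (le_of_eq hs0.symm) h1, hs0, sub_zero, hF.map_zero, hc0]
  · -- γ T = y
    rw [hγT (s N) le_rfl, hcN]
  · -- ε-closeness
    intro τ hτ u hu
    rcases eq_or_lt_of_le (le_trans hu.2 (by linarith [hτ.1] : s N - τ ≤ s N)) with hT | hT
    · -- u = s N forces τ = 0
      have hτ0 : τ = 0 := by
        have := hu.2; rw [hT] at this; linarith [hτ.1]
      rw [hτ0, add_zero, hF.map_zero]
      rw [dist_self]; exact hε
    · obtain ⟨hiN, h1, h2⟩ := sidx_spec hs0 hu.1 hT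
      set i := sidx s N u
      have hγu : γ u = F (u - s i) (c i) := hγ_eq u i hiN h1 h2
      have hFτ : F τ (γ u) = F (τ + (u - s i)) (c i) := by
        rw [hγu, hF.map_add τ (u - s i) hτ.1 (by linarith)]
      rcases lt_or_ge (u + τ) (s (i + 1)) with hcase | hcase
      · -- no jump crossed
        have huτN : u + τ < s N := lt_of_lt_of_le hcase (hsmono.monotone hiN)
        rw [hγ_eq (u + τ) i hiN (by linarith [hτ.1]) hcase, hFτ]
        have : u + τ - s i = τ + (u - s i) := by ring
        rw [this, dist_self]; exact hε
      · -- one jump crossed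
        set σ := u + τ - s (i + 1) with hσdef
        have hσ0 : 0 ≤ σ := by simp only [hσdef]; linarith
        have hσ1 : σ ≤ 1 := by
          have : s (i + 1) > u := h2
          simp only [hσdef]; linarith [hτ.2]
        have hjump : dist (c (i + 1)) (F (t i) (c i)) < δ := by
          rw [dist_comm]
          exact lt_of_lt_of_le (hstep i hiN).2 (min_le_left δ ε)
        have hFτ' : F τ (γ u) = F σ (F (t i) (c i)) := by
          rw [hFτ]
          have harg : τ + (u - s i) = σ + t' i := by
            simp only [hσdef]; rw [hssucc i]; ring
          rw [harg, hF.map_add σ (t' i) hσ0 (by linarith [ht2 i]), ht'eq i hiN]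
        have hγuτ : γ (u + τ) = F σ (c (i + 1)) := by
          have huτN : u + τ ≤ s N := by linarith [hu.2]
          rcases lt_or_eq_of_le huτN with hlt | heq
          · have hi1N : i + 1 < N := by
              have : s (i + 1) < s N := lt_of_le_of_lt hcase hlt
              exact hsmono.lt_iff_lt.1 this
            have hub : u + τ < s (i + 1 + 1) := by
              have := hs2 (i + 1); simp only [hσdef] at hσ1; linarith
            rw [hγ_eq (u + τ) (i + 1) hi1N hcase hub]
          · -- u + τ = s N : last jump, σ = 0 and i + 1 = N
            have hi1N : i + 1 = N := by
              rcases Nat.lt_or_ge (i + 1) N with hlt' | hge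
              · exfalso
                have h3 : s (i + 1) + 2 ≤ s (i + 1 + 1) := hs2 (i + 1)
                have h4 : s (i + 1 + 1) ≤ s N := hsmono.monotone hlt'
                simp only [hσdef] at hσ1
                linarith
              · exact le_antisymm (Nat.succ_le_of_lt hiN) hge
            have hσz : σ = 0 := by simp only [hσdef]; rw [hi1N, ← heq]; ring
            rw [hγT (u + τ) (le_of_eq heq.symm), hσz, hF.map_zero, hi1N]
        rw [hγuτ, hFτ']
        exact hδ' σ ⟨hσ0, hσ1⟩ _ _ hjump
end

section
/- Let F be a semiflow on a compact metric space (X,d). Then every Conley chain-recurrent point is shadow chain-recurrent: R_C ⊆ R_S. -/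
open Set Metric Filter

variable {X : Type*} [MetricSpace X]

section AuxRCRS

/-- Index of the orbit segment containing time `u`. -/
noncomputable def chainIdx (s : ℕ → ℝ) (N : ℕ) (u : ℝ) : ℕ :=
  Nat.findGreatest (fun i => s i ≤ u) N

theorem chainIdx_le (s : ℕ → ℝ) (N : ℕ) (u : ℝ) : chainIdx s N u ≤ N :=
  Nat.findGreatest_le N

theorem chainIdx_spec {s : ℕ → ℝ} {N : ℕ} {u : ℝ} (h0 : s 0 ≤ u) :
    s (chainIdx s N u) ≤ u :=
  Nat.findGreatest_spec (P := fun i => s i ≤ u) (Nat.zero_le N) h0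

theorem lt_of_chainIdx_lt {s : ℕ → ℝ} {N : ℕ} {u : ℝ} (h : chainIdx s N u < N) :
    u < s (chainIdx s N u + 1) := by
  by_contra hc
  push_neg at hc
  have h2 : chainIdx s N u + 1 ≤ chainIdx s N u :=
    Nat.le_findGreatest (P := fun i => s i ≤ u) (Nat.succ_le_of_lt h) hc
  omega

theorem chainIdx_eq {s : ℕ → ℝ} {N : ℕ} (hmono : ∀ i j, i ≤ j → j ≤ N → s i ≤ s j)
    {j : ℕ} {v : ℝ} (hj : j ≤ N) (h1 : s j ≤ v) (h2 : j = N ∨ v < s (j + 1)) :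
    chainIdx s N v = j := by
  have hle : j ≤ chainIdx s N v := Nat.le_findGreatest (P := fun i => s i ≤ v) hj h1
  rcases Nat.lt_or_ge j (chainIdx s N v) with h | h
  · exfalso
    have hsp : s (chainIdx s N v) ≤ v := chainIdx_spec (hmono 0 j (Nat.zero_le j) hj |>.trans h1)
    rcases h2 with rfl | h2
    · have := chainIdx_le s j v; omega
    · have : s (j + 1) ≤ s (chainIdx s N v) := hmono _ _ h (chainIdx_le s N v)
      linarith
  · omega

theorem tendsto_flow {F : ℝ → X → X} (hF : IsSemiflow F) (x0 : X) (r w : ℝ) (hw : r ≤ w)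
    (A : Set ℝ) (hA : ∀ v ∈ A, r ≤ v) :
    Filter.Tendsto (fun v => F (v - r) x0) (nhdsWithin w A) (nhds (F (w - r) x0)) := by
  have hcw : ContinuousWithinAt (fun p : ℝ × X => F p.1 p.2) (Set.Ici 0 ×ˢ Set.univ)
      (w - r, x0) := hF.cont _ ⟨by simpa using hw, mem_univ _⟩
  have hg : Tendsto (fun v => ((v - r : ℝ), x0)) (nhdsWithin w A)
      (nhdsWithin (w - r, x0) (Set.Ici 0 ×ˢ Set.univ)) := by
    rw [tendsto_nhdsWithin_iff]
    constructor
    · exact Tendsto.prodMk_nhds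
        (((continuous_sub_right r).tendsto w).mono_left nhdsWithin_le_nhds)
        tendsto_const_nhds
    · exact eventually_nhdsWithin_of_forall fun v hv =>
        ⟨by simpa using hA v hv, mem_univ _⟩
  exact hcw.tendsto.comp hg

theorem conley_shadow [CompactSpace X] {F : ℝ → X → X} (hF : IsSemiflow F) {a b : X}
    (h : ConleyLe F a b) : ShadowLe F a b := by
  intro ε hε
  -- uniform continuity on [0,1] × X
  obtain ⟨δ, hδ, hδε⟩ : ∃ δ > (0:ℝ), ∀ σ ∈ Set.Icc (0:ℝ) 1, ∀ p q : X, dist p q < δ →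
      dist (F σ p) (F σ q) < ε := by
    have hK : IsCompact (Set.Icc (0:ℝ) 1 ×ˢ (Set.univ : Set X)) :=
      isCompact_Icc.prod isCompact_univ
    have hcont : ContinuousOn (fun p : ℝ × X => F p.1 p.2) (Set.Icc (0:ℝ) 1 ×ˢ Set.univ) :=
      hF.cont.mono (fun p hp => ⟨hp.1.1, mem_univ _⟩)
    have huc := hK.uniformContinuousOn_of_continuous hcont
    rw [Metric.uniformContinuousOn_iff] at huc
    obtain ⟨δ, hδ, hd⟩ := huc ε hε
    refine ⟨δ, hδ, fun σ hσ p q hpq => ?_⟩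
    refine hd (σ, p) ⟨hσ, mem_univ _⟩ (σ, q) ⟨hσ, mem_univ _⟩ ?_
    rw [Prod.dist_eq]
    simp only [dist_self]
    exact max_lt hδ hpq
  obtain ⟨N, c, t, hN, hc0, hcN, hstep⟩ := h δ hδ 1 one_pos
  set s : ℕ → ℝ := fun i => ∑ j ∈ Finset.range i, t j with hs_def
  have hs0 : s 0 = 0 := by simp [hs_def]
  have hssucc : ∀ i, s (i + 1) = s i + t i := fun i => Finset.sum_range_succ t i
  have ht1 : ∀ i < N, (1:ℝ) ≤ t i := fun i hi => (hstep i hi).1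
  have hstep1 : ∀ i < N, s i + 1 ≤ s (i + 1) := by
    intro i hi; rw [hssucc]; linarith [ht1 i hi]
  have hmono : ∀ i j, i ≤ j → j ≤ N → s i ≤ s j := by
    intro i j hij hjN
    induction j, hij using Nat.le_induction with
    | base => exact le_rfl
    | succ k hk ih =>
      have h1 := hstep1 k (by omega)
      have h2 := ih (by omega)
      linarith
  set γ : ℝ → X := fun u => F (u - s (chainIdx s N u)) (c (chainIdx s N u)) with hγdef
  have hγeq : ∀ j ≤ N, ∀ v : ℝ, s j ≤ v → (j = N ∨ v < s (j + 1)) →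
      γ v = F (v - s j) (c j) := by
    intro j hj v h1 h2
    rw [hγdef]
    simp only
    rw [chainIdx_eq hmono hj h1 h2]
  have helper : ∀ j ≤ N, ∀ w : ℝ, s j ≤ w → ∀ A : Set ℝ,
      (∀ v ∈ A, s j ≤ v ∧ (j = N ∨ v < s (j + 1))) →
      Filter.Tendsto γ (nhdsWithin w A) (nhds (F (w - s j) (c j))) := by
    intro j hj w hw A hA
    refine Filter.Tendsto.congr' ?_ (tendsto_flow hF (c j) (s j) w hw A (fun v hv => (hA v hv).1))
    filter_upwards [self_mem_nhdsWithin] with v hv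
    exact (hγeq j hj v (hA v hv).1 (hA v hv).2).symm
  have hT1 : (1:ℝ) ≤ s N := by
    have h1 : s 1 = t 0 := by rw [hssucc, hs0]; ring
    have h2 : s 1 ≤ s N := hmono 1 N hN le_rfl
    have h3 := ht1 0 (by omega)
    linarith
  refine ⟨s N, γ, hT1, ⟨⟨(Finset.range (N + 1)).image s, ?_⟩, ?_, ?_⟩, ?_, ?_, ?_⟩
  · -- continuity off finitely many points
    intro u hu huS
    have h0u : (0:ℝ) ≤ u := hu.1
    set i := chainIdx s N u with hidef
    have hsi : s i ≤ u := chainIdx_spec (by rw [hs0]; exact h0u)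
    have hiN : i ≤ N := chainIdx_le _ _ _
    have hne : ∀ k ≤ N, s k ≠ u := by
      intro k hk he
      exact huS (Finset.mem_image.mpr ⟨k, Finset.mem_range.mpr (by omega), he⟩)
    have hiltN : i < N := by
      rcases Nat.eq_or_lt_of_le hiN with he | hlt
      · exfalso
        apply hne N le_rfl
        have h1 : s N ≤ u := he ▸ hsi
        have h2 : u ≤ s N := hu.2
        linarith
      · exact hlt
    have hu1 : u < s (i + 1) := lt_of_chainIdx_lt hiltN
    have hslt : s i < u := lt_of_le_of_ne hsi (hne i hiN)
    have h1 : Filter.Tendsto γ (nhdsWithin u (Set.Ioo (s i) (s (i + 1))))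
        (nhds (F (u - s i) (c i))) :=
      helper i hiN u hsi _ (fun v hv => ⟨hv.1.le, Or.inr hv.2⟩)
    have h2 : γ u = F (u - s i) (c i) := hγeq i hiN u hsi (Or.inr hu1)
    rw [ContinuousWithinAt, h2]
    exact h1.mono_left (nhdsWithin_le_of_mem
      (mem_nhdsWithin_of_mem_nhds (Ioo_mem_nhds hslt hu1)))
  · -- left limits
    intro u hu
    have h0u : 0 < u := hu.1
    have huT : u ≤ s N := hu.2
    set i := chainIdx s N u with hidef
    have hsi : s i ≤ u := chainIdx_spec (by rw [hs0]; linarith)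
    have hiN : i ≤ N := chainIdx_le _ _ _
    rcases eq_or_lt_of_le hsi with he | hlt
    · -- u = s i, approach from previous segment
      obtain ⟨k, hik⟩ : ∃ k, i = k + 1 := by
        rcases Nat.eq_zero_or_pos i with h0 | hpos
        · exfalso; rw [h0, hs0] at he; linarith
        · exact ⟨i - 1, by omega⟩
      rw [hik] at he
      have hkN : k ≤ N := by omega
      have hsk : s k < u := by
        have := hstep1 k (by omega)
        linarith [he]
      refine ⟨F (u - s k) (c k), ?_⟩
      have hth := helper k hkN u hsk.le (Set.Ioo (s k) u)
        (fun v hv => ⟨hv.1.le, Or.inr (by rw [he]; exact hv.2)⟩)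
      exact hth.mono_left (nhdsWithin_le_of_mem (Ioo_mem_nhdsLT_of_mem ⟨hsk, le_rfl⟩))
    · have hiltN : i < N := by
        rcases Nat.eq_or_lt_of_le hiN with he' | h2
        · exfalso; rw [he'] at hlt; linarith
        · exact h2
      have hu1 : u < s (i + 1) := lt_of_chainIdx_lt hiltN
      refine ⟨F (u - s i) (c i), ?_⟩
      have hth := helper i hiN u hsi (Set.Ioo (s i) u)
        (fun v hv => ⟨hv.1.le, Or.inr (hv.2.trans hu1)⟩)
      exact hth.mono_left (nhdsWithin_le_of_mem (Ioo_mem_nhdsLT_of_mem ⟨hlt, le_rfl⟩))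
  · -- right limits
    intro u hu
    set i := chainIdx s N u with hidef
    have hsi : s i ≤ u := chainIdx_spec (by rw [hs0]; exact hu.1)
    have hiN : i ≤ N := chainIdx_le _ _ _
    have hiltN : i < N := by
      rcases Nat.eq_or_lt_of_le hiN with he | h2
      · exfalso; rw [he] at hsi; exact absurd hu.2 (not_lt.mpr hsi)
      · exact h2
    have hu1 : u < s (i + 1) := lt_of_chainIdx_lt hiltN
    refine ⟨F (u - s i) (c i), ?_⟩
    have hth := helper i hiN u hsi (Set.Ioo u (s (i + 1)))
      (fun v hv => ⟨hsi.trans hv.1.le, Or.inr hv.2⟩)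
    exact hth.mono_left (nhdsWithin_le_of_mem (Ioo_mem_nhdsGT_of_mem ⟨le_rfl, hu1⟩))
  · -- γ 0 = a
    have h2 : (0:ℝ) < s 1 := by
      have h1 : s 1 = t 0 := by rw [hssucc, hs0]; ring
      linarith [ht1 0 (by omega)]
    rw [hγeq 0 (by omega) 0 (le_of_eq hs0) (Or.inr (by simpa using h2))]
    rw [hs0, sub_zero, hF.map_zero, hc0]
  · -- γ T = b
    rw [hγeq N le_rfl (s N) le_rfl (Or.inl rfl), sub_self, hF.map_zero, hcN]
  · -- EpsCloseTo
    intro τ hτ tt htt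
    rcases eq_or_lt_of_le hτ.1 with hτ0 | hτ0
    · rw [← hτ0, add_zero, hF.map_zero, dist_self]
      exact hε
    · set i := chainIdx s N tt with hidef
      have h0tt : 0 ≤ tt := htt.1
      have hsi : s i ≤ tt := chainIdx_spec (by rw [hs0]; exact h0tt)
      have hiN : i ≤ N := chainIdx_le _ _ _
      have httT : tt ≤ s N - τ := htt.2
      have hiltN : i < N := by
        rcases Nat.eq_or_lt_of_le hiN with he | h2
        · exfalso; rw [he] at hsi; linarith
        · exact h2
      have httlt : tt < s (i + 1) := lt_of_chainIdx_lt hiltN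
      set u := tt + τ with hu
      set j := chainIdx s N u with hjdef
      have hij : i ≤ j := Nat.le_findGreatest (P := fun k => s k ≤ u) hiN (by
        show s i ≤ u
        rw [hu]; linarith)
      have hγtt : γ tt = F (tt - s i) (c i) := rfl
      have hγu : γ u = F (u - s j) (c j) := rfl
      rcases Nat.eq_or_lt_of_le hij with he | hlt
      · have heq : γ u = F τ (γ tt) := by
          rw [hγu, hγtt, ← he, ← hF.map_add τ (tt - s i) hτ0.le (by linarith) (c i)]
          congr 1
          rw [hu]; ring
        rw [heq, dist_self]; exact hε
      · have hsj : s j ≤ u := chainIdx_spec (by rw [hs0, hu]; linarith)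
        have hjN : j ≤ N := chainIdx_le _ _ _
        have hji : j = i + 1 := by
          by_contra hne
          have h2 : i + 2 ≤ j := by omega
          have hti1 : (1:ℝ) ≤ t (i + 1) := ht1 (i + 1) (by omega)
          have hm : s (i + 2) ≤ s j := hmono _ _ h2 hjN
          have hux : u < s (i + 2) := by
            rw [hssucc (i + 1), hu]
            have := hτ.2
            linarith
          linarith
        rw [hji] at hsj hγu
        have hσ0 : 0 ≤ u - s (i + 1) := by linarith
        have hσ1 : u - s (i + 1) ≤ 1 := by
          have := hτ.2
          rw [hu]; linarith
        have hdist : dist (c (i + 1)) (F (t i) (c i)) < δ := by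
          rw [dist_comm]; exact (hstep i hiltN).2
        have key := hδε (u - s (i + 1)) ⟨hσ0, hσ1⟩ (c (i + 1)) (F (t i) (c i)) hdist
        have hFτ : F τ (γ tt) = F (u - s (i + 1)) (F (t i) (c i)) := by
          rw [hγtt, ← hF.map_add τ (tt - s i) hτ0.le (by linarith) (c i),
            ← hF.map_add (u - s (i + 1)) (t i) hσ0 (by linarith [ht1 i hiltN]) (c i)]
          congr 1
          rw [hssucc i, hu]; ring
        calc dist (γ u) (F τ (γ tt))
            = dist (F (u - s (i + 1)) (c (i + 1))) (F (u - s (i + 1)) (F (t i) (c i))) := by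
              rw [hγu, hFτ]
          _ < ε := key

end AuxRCRS

/-- on a compact metric space, `R_C ⊆ R_S`. -/
theorem RC_subset_RS [CompactSpace X] (F : ℝ → X → X) (hF : IsSemiflow F) :
    RC F ⊆ RS F := by
  intro x hx
  rcases hx with hfix | ⟨y, hxy, hyx⟩
  · exact Or.inl hfix
  · exact Or.inr ⟨y, conley_shadow hF hxy, conley_shadow hF hyx⟩
end

section
/- Let F be a semiflow on a metric space (X,d), let ε > 0, and let γ : [0,T] → X with T > 1 be an ε-chain from x to itself (an ε-loop at x). Then there exists τ* ∈ (0, T−1) such that for every T' ∈ (T−τ*, T) there is a 4ε-chain γ' : [0,T'] → X from x to itself. -/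
open Set Metric Filter

variable {X : Type*} [MetricSpace X]

/-- shortening an `ε`-loop. -/
theorem shorten_eps_loop (F : ℝ → X → X) (hF : IsSemiflow F) {ε T : ℝ} {x : X}
    {γ : ℝ → X} (hε : 0 < ε) (hT : 1 < T) (h : IsShadowChain F ε T γ x x) :
    ∃ τs ∈ Set.Ioo (0:ℝ) (T - 1), ∀ T' ∈ Set.Ioo (T - τs) T,
      ∃ γ' : ℝ → X, IsShadowChain F (4 * ε) T' γ' x x := by
  obtain ⟨hT1, ⟨⟨S, hS⟩, hleft, hright⟩, h0, hTx, hclose⟩ := h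
  obtain ⟨L, hL⟩ := hleft T ⟨by linarith, le_rfl⟩
  have hc : ContinuousWithinAt (fun p : ℝ × X => F p.1 p.2) (Set.Ici 0 ×ˢ Set.univ) (0, L) :=
    hF.cont (0, L) ⟨Set.mem_Ici.mpr le_rfl, Set.mem_univ _⟩
  rw [Metric.continuousWithinAt_iff] at hc
  obtain ⟨η, hη, hcont⟩ := hc (ε/2) (by linarith)
  rw [Metric.tendsto_nhdsWithin_nhds] at hL
  obtain ⟨δ₀, hδ₀, hLlim⟩ := hL (min (ε/2) η) (lt_min (by linarith) hη)
  refine ⟨min (min η δ₀) (min 1 ((T-1)/2)),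
    ⟨lt_min (lt_min hη hδ₀) (lt_min one_pos (by linarith)), ?_⟩, ?_⟩
  · calc min (min η δ₀) (min 1 ((T-1)/2)) ≤ min 1 ((T-1)/2) := min_le_right _ _
      _ ≤ (T-1)/2 := min_le_right _ _
      _ < T - 1 := by linarith
  intro T' hT'
  obtain ⟨hT'l, hT'u⟩ := hT'
  have hmin1 : min (min η δ₀) (min 1 ((T-1)/2)) ≤ η := (min_le_left _ _).trans (min_le_left _ _)
  have hmin2 : min (min η δ₀) (min 1 ((T-1)/2)) ≤ δ₀ := (min_le_left _ _).trans (min_le_right _ _)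
  have hmin3 : min (min η δ₀) (min 1 ((T-1)/2)) ≤ 1 := (min_le_right _ _).trans (min_le_left _ _)
  have hmin4 : min (min η δ₀) (min 1 ((T-1)/2)) ≤ (T-1)/2 := (min_le_right _ _).trans (min_le_right _ _)
  set δ : ℝ := T - T' with hδdef
  have hδpos : 0 < δ := by simp only [hδdef]; linarith
  have hδη : δ < η := by simp only [hδdef]; linarith
  have hδδ0 : δ < δ₀ := by simp only [hδdef]; linarith
  have hδ1 : δ < 1 := by simp only [hδdef]; linarith
  have hT'1 : 1 < T' := by linarith
  have hγT' : dist (γ T') L < min (ε/2) η := by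
    apply hLlim hT'u
    rw [Real.dist_eq, abs_of_neg (by linarith : T' - T < 0)]
    linarith
  have hγT'ε : dist (γ T') L < ε/2 := hγT'.trans_le (min_le_left _ _)
  have ha : dist (F δ (γ T')) L < ε/2 := by
    have := hcont (x := (δ, γ T')) ⟨Set.mem_Ici.mpr hδpos.le, Set.mem_univ _⟩ ?_
    · simpa [hF.map_zero] using this
    · rw [Prod.dist_eq]
      refine max_lt ?_ (hγT'.trans_le (min_le_right _ _))
      rw [Real.dist_eq, sub_zero, abs_of_pos hδpos]; exact hδη
  have h1 : dist (γ T) (F δ (γ T')) < ε := by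
    have := hclose δ ⟨hδpos.le, hδ1.le⟩ T' ⟨by linarith, by simp [hδdef]⟩
    have he : T' + δ = T := by simp [hδdef]
    rwa [he] at this
  refine ⟨fun s => if s < T' then γ s else x, hT'1.le, ⟨⟨insert T' S, ?_⟩, ?_, ?_⟩, ?_, ?_, ?_⟩
  · intro t ht htS
    rw [Finset.mem_insert] at htS
    push_neg at htS
    have htlt : t < T' := lt_of_le_of_ne ht.2 htS.1
    have hγc : ContinuousWithinAt γ (Set.Icc 0 T) t := hS t ⟨ht.1, by linarith⟩ htS.2
    have hγc' : ContinuousWithinAt γ (Set.Icc 0 T') t :=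
      hγc.mono (Set.Icc_subset_Icc le_rfl (by linarith))
    apply hγc'.congr_of_eventuallyEq
    · filter_upwards [mem_nhdsWithin_of_mem_nhds (Iio_mem_nhds htlt)] with s hs
      exact if_pos hs
    · exact if_pos htlt
  · intro t ht
    obtain ⟨L', hL'⟩ := hleft t ⟨ht.1, by linarith [ht.2]⟩
    refine ⟨L', hL'.congr' ?_⟩
    filter_upwards [eventually_mem_nhdsWithin] with s hs
    exact (if_pos (lt_of_lt_of_le hs ht.2)).symm
  · intro t ht
    obtain ⟨L', hL'⟩ := hright t ⟨ht.1, by linarith [ht.2]⟩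
    refine ⟨L', hL'.congr' ?_⟩
    filter_upwards [mem_nhdsWithin_of_mem_nhds (Iio_mem_nhds (show t < T' from ht.2))] with s hs
    exact (if_pos hs).symm
  · simp only [if_pos (show (0:ℝ) < T' by linarith)]; exact h0
  · simp only [if_neg (lt_irrefl T')]
  · intro τ hτ t ht
    have htτ : t + τ ≤ T' := by linarith [ht.2]
    rcases lt_or_eq_of_le htτ with hlt | heq
    · have ht1 : t < T' := lt_of_le_of_lt (le_add_of_nonneg_right hτ.1) hlt
      simp only [if_pos hlt, if_pos ht1]
      exact lt_of_lt_of_le (hclose τ hτ t ⟨ht.1, by linarith⟩) (by linarith)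
    · rcases eq_or_lt_of_le hτ.1 with hτ0 | hτpos
      · have htT' : t = T' := by rw [← hτ0, add_zero] at heq; exact heq
        subst htT'
        simp only [← hτ0, add_zero, if_neg (lt_irrefl t), hF.map_zero, dist_self]
        linarith
      · have ht1 : t < T' := by linarith
        have h4 : dist (γ T') (F τ (γ t)) < ε := by
          have := hclose τ hτ t ⟨ht.1, by linarith⟩
          rwa [heq] at this
        simp only [heq, if_neg (lt_irrefl T'), if_pos ht1]
        have hcomm : dist L (γ T') = dist (γ T') L := dist_comm _ _
        have t1 := dist_triangle (γ T) (F δ (γ T')) (F τ (γ t))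
        have t2 := dist_triangle (F δ (γ T')) (γ T') (F τ (γ t))
        have t3 := dist_triangle (F δ (γ T')) L (γ T')
        have hxT : dist x (F τ (γ t)) = dist (γ T) (F τ (γ t)) := by rw [hTx]
        rw [hxT]
        linarith
end

section
/- Let F be a semiflow on a compact metric space (X,d). Let y ∈ X be shadow chain-recurrent (y ∈ R_S) and let x ∈ X satisfy x ≽_S y. Then x ≽_C y: for every ε > 0 and T > 0 there exists an (ε,T)-chain from x to y. -/
open Set Metric Filter

variable {X : Type*} [MetricSpace X]

/-! ### Auxiliary machinery for Statement 12 -/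

/-- A weak chain: like `EpsCloseTo` but with a non-strict inequality and no
regularity requirement on the curve. -/
def WChain (F : ℝ → X → X) (q T' : ℝ) (γ : ℝ → X) : Prop :=
  ∀ τ ∈ Set.Icc (0:ℝ) 1, ∀ t ∈ Set.Icc (0:ℝ) (T' - τ),
    dist (γ (t + τ)) (F τ (γ t)) ≤ q

lemma WChain.mono {F : ℝ → X → X} {q q' T' : ℝ} {γ : ℝ → X}
    (h : WChain F q T' γ) (hq : q ≤ q') : WChain F q' T' γ :=
  fun τ hτ t ht => (h τ hτ t ht).trans hq

/-- Uniform continuity of the semiflow on a bounded time interval. -/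
lemma uc_lemma [CompactSpace X] {F : ℝ → X → X} (hF : IsSemiflow F)
    (M : ℝ) (hM : 0 ≤ M) {η : ℝ} (hη : 0 < η) :
    ∃ δ > 0, ∀ a b : X, dist a b ≤ δ → ∀ s, 0 ≤ s → s ≤ M →
      dist (F s a) (F s b) ≤ η := by
  have hK : IsCompact ((Set.Icc (0:ℝ) M) ×ˢ (Set.univ : Set X)) :=
    isCompact_Icc.prod isCompact_univ
  have hc : ContinuousOn (fun p : ℝ × X => F p.1 p.2) (Set.Icc 0 M ×ˢ Set.univ) :=
    hF.cont.mono (Set.prod_mono Set.Icc_subset_Ici_self subset_rfl)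
  have huc := hK.uniformContinuousOn_of_continuous hc
  rw [Metric.uniformContinuousOn_iff] at huc
  obtain ⟨δ, hδ, hd⟩ := huc η hη
  refine ⟨δ/2, by positivity, fun a b hab s hs hsM => ?_⟩
  have hmem : ∀ z : X, (s, z) ∈ Set.Icc (0:ℝ) M ×ˢ (Set.univ : Set X) :=
    fun z => ⟨⟨hs, hsM⟩, trivial⟩
  have hlt : dist ((s, a) : ℝ × X) (s, b) < δ := by
    rw [Prod.dist_eq]
    simp only [dist_self]
    calc max 0 (dist a b) = dist a b := max_eq_right dist_nonneg
      _ ≤ δ/2 := hab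
      _ < δ := by linarith
  exact (hd (s, a) (hmem a) (s, b) (hmem b) hlt).le

/-- Concatenation of weak chains. -/
lemma wchain_concat {F : ℝ → X → X} (hF : IsSemiflow F)
    {q1 q2 η T1 T2 : ℝ} {γ1 γ2 : ℝ → X}
    (hη0 : 0 ≤ η) (hT1 : 0 ≤ T1) (hT2 : 1 ≤ T2)
    (h1 : WChain F q1 T1 γ1) (h2 : WChain F q2 T2 γ2)
    (hglue : γ2 0 = γ1 T1)
    (hP : ∀ a b : X, dist a b ≤ q1 → ∀ s, 0 ≤ s → s ≤ 1 →
      dist (F s a) (F s b) ≤ η) :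
    WChain F (max q1 (q2 + η)) (T1 + T2)
      (fun t => if t ≤ T1 then γ1 t else γ2 (t - T1)) := by
  rintro τ ⟨hτ0, hτ1⟩ t ⟨ht0, htT⟩
  by_cases h1c : t + τ ≤ T1
  · have htle : t ≤ T1 := by linarith
    simp only [if_pos h1c, if_pos htle]
    exact le_trans (h1 τ ⟨hτ0, hτ1⟩ t ⟨ht0, by linarith⟩) (le_max_left _ _)
  · push_neg at h1c
    by_cases h2c : t ≤ T1
    · -- junction case
      have hu0 : (0:ℝ) ≤ T1 - t := by linarith
      have huτ : T1 - t ≤ τ := by linarith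
      have hσ0 : (0:ℝ) ≤ t + τ - T1 := by linarith
      have hστ : t + τ - T1 ≤ τ := by linarith
      have e1 : dist (γ2 (t + τ - T1)) (F (t + τ - T1) (γ1 T1)) ≤ q2 := by
        have := h2 (t + τ - T1) ⟨hσ0, hστ.trans hτ1⟩ 0 ⟨le_refl _, by linarith⟩
        rwa [zero_add, hglue] at this
      have e2 : dist (F (T1 - t) (γ1 t)) (γ1 T1) ≤ q1 := by
        have := h1 (T1 - t) ⟨hu0, huτ.trans hτ1⟩ t ⟨ht0, by linarith⟩
        rw [dist_comm] at this
        convert this using 3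
        ring
      have e3 : dist (F (t + τ - T1) (F (T1 - t) (γ1 t)))
          (F (t + τ - T1) (γ1 T1)) ≤ η :=
        hP _ _ e2 _ hσ0 (hστ.trans hτ1)
      have hFτ : F τ (γ1 t) = F (t + τ - T1) (F (T1 - t) (γ1 t)) := by
        rw [← hF.map_add _ _ hσ0 hu0]
        congr 1
        ring
      simp only [if_pos h2c, if_neg (not_le.mpr h1c)]
      calc dist (γ2 (t + τ - T1)) (F τ (γ1 t))
          ≤ dist (γ2 (t + τ - T1)) (F (t + τ - T1) (γ1 T1))
            + dist (F (t + τ - T1) (γ1 T1)) (F τ (γ1 t)) := dist_triangle _ _ _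
        _ ≤ q2 + η := by
            rw [hFτ]
            exact add_le_add e1 (by rw [dist_comm]; exact e3)
        _ ≤ max q1 (q2 + η) := le_max_right _ _
    · push_neg at h2c
      have hnot : ¬ (t + τ ≤ T1) := by linarith
      simp only [if_neg (not_le.mpr h2c), if_neg hnot]
      have harg : t + τ - T1 = (t - T1) + τ := by ring
      rw [harg]
      refine le_trans (h2 τ ⟨hτ0, hτ1⟩ (t - T1) ⟨by linarith, by linarith⟩) ?_
      exact le_trans (le_add_of_nonneg_right hη0) (le_max_right _ _)

/-- Error propagation along a weak chain: tracking the flow for time `σ + k`. -/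
lemma wchain_track {F : ℝ → X → X} (hF : IsSemiflow F)
    {δ₁ η M T' : ℝ} {γ : ℝ → X}
    (hγ : WChain F δ₁ T' γ)
    (hP : ∀ a b : X, dist a b ≤ δ₁ → ∀ s, 0 ≤ s → s ≤ M →
      dist (F s a) (F s b) ≤ η) :
    ∀ k : ℕ, ∀ σ t : ℝ, 0 ≤ σ → σ ≤ 1 → 0 ≤ t → σ + k ≤ M → t + (σ + k) ≤ T' →
      dist (γ (t + (σ + k))) (F (σ + k) (γ t)) ≤ δ₁ + k * η := by
  intro k
  induction k with
  | zero =>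
    intro σ t hσ0 hσ1 ht0 hM hT
    push_cast at hT ⊢
    simpa using hγ σ ⟨hσ0, hσ1⟩ t ⟨ht0, by linarith⟩
  | succ k ih =>
    intro σ t hσ0 hσ1 ht0 hM hT
    have hk : (0:ℝ) ≤ (k:ℝ) := Nat.cast_nonneg k
    push_cast at hM hT ⊢
    have hsplit : F (σ + ((k:ℝ) + 1)) (γ t) = F (σ + k) (F 1 (γ t)) := by
      have harg : σ + ((k:ℝ) + 1) = (σ + k) + 1 := by ring
      rw [harg, hF.map_add _ _ (by linarith) zero_le_one]
    have e1 : dist (γ (t + 1)) (F 1 (γ t)) ≤ δ₁ :=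
      hγ 1 ⟨zero_le_one, le_refl 1⟩ t ⟨ht0, by linarith⟩
    have e2 : dist (F (σ + k) (γ (t + 1))) (F (σ + k) (F 1 (γ t))) ≤ η :=
      hP _ _ e1 _ (by linarith) (by linarith)
    have e3 : dist (γ ((t + 1) + (σ + k))) (F (σ + k) (γ (t + 1))) ≤ δ₁ + k * η :=
      ih σ (t + 1) hσ0 hσ1 (by linarith) (by push_cast; linarith)
        (by push_cast; linarith)
    have harg2 : t + (σ + ((k:ℝ) + 1)) = (t + 1) + (σ + k) := by ring
    calc dist (γ (t + (σ + ((k:ℝ) + 1)))) (F (σ + ((k:ℝ) + 1)) (γ t))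
        ≤ dist (γ ((t + 1) + (σ + k))) (F (σ + k) (γ (t + 1)))
          + dist (F (σ + k) (γ (t + 1))) (F (σ + k) (F 1 (γ t))) := by
          rw [harg2, hsplit]
          exact dist_triangle _ _ _
      _ ≤ (δ₁ + k * η) + η := add_le_add e3 e2
      _ = δ₁ + ((k:ℝ) + 1) * η := by ring

/-- Real-time version of error propagation. -/
lemma wchain_dist {F : ℝ → X → X} (hF : IsSemiflow F)
    {δ₁ η M T' : ℝ} {γ : ℝ → X} (hη0 : 0 ≤ η)
    (hγ : WChain F δ₁ T' γ)
    (hP : ∀ a b : X, dist a b ≤ δ₁ → ∀ s, 0 ≤ s → s ≤ M →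
      dist (F s a) (F s b) ≤ η) :
    ∀ s t : ℝ, 0 ≤ s → s ≤ M → 0 ≤ t → t + s ≤ T' →
      dist (γ (t + s)) (F s (γ t)) ≤ δ₁ + s * η := by
  intro s t hs0 hsM ht0 hT
  set k : ℕ := ⌊s⌋₊ with hk
  have hks : (k:ℝ) ≤ s := Nat.floor_le hs0
  have hsk : s < (k:ℝ) + 1 := Nat.lt_floor_add_one s
  have hdecomp : s = (s - k) + k := by ring
  have := wchain_track hF hγ hP k (s - k) t (by linarith) (by linarith)
    ht0 (by linarith) (by linarith)
  rw [← hdecomp] at this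
  refine this.trans ?_
  have : (k:ℝ) * η ≤ s * η := mul_le_mul_of_nonneg_right hks hη0
  linarith

/-- on a compact metric space, if `y ∈ R_S` and `x ≽_S y`,
then `x ≽_C y`. -/
theorem shadowLe_imp_conleyLe_of_recurrent [CompactSpace X] (F : ℝ → X → X)
    (hF : IsSemiflow F) {x y : X} (hy : y ∈ RS F) (h : ShadowLe F x y) :
    ConleyLe F x y := by
  intro ε hε T hT
  set M : ℝ := 2*T + 1 with hMdef
  have hM0 : (0:ℝ) ≤ M := by rw [hMdef]; linarith
  set η : ℝ := ε / (4*T + 4) with hηdef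
  have hη0 : (0:ℝ) < η := by
    rw [hηdef]; exact div_pos hε (by linarith)
  obtain ⟨δP, hδP0, hδP⟩ := uc_lemma hF M hM0 hη0
  set δ₁ : ℝ := min η δP with hδ₁def
  have hδ₁0 : 0 < δ₁ := lt_min hη0 hδP0
  have hδ₁η : δ₁ ≤ η := min_le_left _ _
  have hPM : ∀ a b : X, dist a b ≤ δ₁ → ∀ s, 0 ≤ s → s ≤ M →
      dist (F s a) (F s b) ≤ η :=
    fun a b hab => hδP a b (hab.trans (min_le_right _ _))
  -- a decreasing sequence of tolerances for repeated concatenation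
  have step : ∀ q : ℝ, 0 < q → ∃ δ, 0 < δ ∧ δ ≤ q/2 ∧
      ∀ a b : X, dist a b ≤ δ → ∀ s, 0 ≤ s → s ≤ 1 →
        dist (F s a) (F s b) ≤ q/2 := by
    intro q hq
    obtain ⟨δ, hδ, hprop⟩ := uc_lemma hF 1 zero_le_one (by positivity : (0:ℝ) < q/2)
    exact ⟨min δ (q/2), lt_min hδ (by positivity), min_le_right _ _,
      fun a b hab s h0 h1 => hprop a b (hab.trans (min_le_left _ _)) s h0 h1⟩
  obtain ⟨d, hd00, hd0, hdhalf, hdprop⟩ : ∃ d : ℕ → ℝ, d 0 = δ₁ ∧ (∀ k, 0 < d k) ∧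
      (∀ k, d (k+1) ≤ d k / 2) ∧
      (∀ k, ∀ a b : X, dist a b ≤ d (k+1) → ∀ s, 0 ≤ s → s ≤ 1 →
        dist (F s a) (F s b) ≤ d k / 2) := by
    choose f hf0 hf1 hf2 using step
    let D : ℕ → {r : ℝ // 0 < r} :=
      fun k => Nat.rec ⟨δ₁, hδ₁0⟩ (fun _ p => ⟨f p.1 p.2, hf0 p.1 p.2⟩) k
    exact ⟨fun k => (D k).1, rfl, fun k => (D k).2,
      fun k => hf1 (D k).1 (D k).2, fun k => hf2 (D k).1 (D k).2⟩
  have hdmono : ∀ k, d (k+1) ≤ d k := fun k => (hdhalf k).trans (by linarith [hd0 k])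
  have hdanti : Antitone d := antitone_nat_of_succ_le hdmono
  set m : ℕ := ⌈T⌉₊ with hmdef
  have hmT : T ≤ (m:ℝ) := Nat.le_ceil T
  -- piece from x to y
  obtain ⟨T1, γ1, hT1, -, hγ10, hγ1T, hγ1c⟩ := h (d (m+2)) (hd0 _)
  have hw1 : WChain F (d (m+2)) T1 γ1 := fun τ hτ t ht => (hγ1c τ hτ t ht).le
  -- the recurrence loop at y
  obtain ⟨S, γL, hS2, hwL, hL0, hLS⟩ :
      ∃ S γL, 2 ≤ S ∧ WChain F (d (m+1)) S γL ∧ γL 0 = y ∧ γL S = y := by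
    rcases hy with hfix | ⟨z, hyz, hzy⟩
    · refine ⟨2, fun _ => y, le_refl _, fun τ hτ t _ => ?_, rfl, rfl⟩
      simp only
      rw [hfix τ hτ.1, dist_self]
      exact (hd0 _).le
    · obtain ⟨S1, γa, hS1, -, hγa0, hγaT, hγac⟩ := hyz (d (m+2)) (hd0 _)
      obtain ⟨S2, γb, hS2, -, hγb0, hγbT, hγbc⟩ := hzy (d (m+2)) (hd0 _)
      have hwa : WChain F (d (m+2)) S1 γa := fun τ hτ t ht => (hγac τ hτ t ht).le
      have hwb : WChain F (d (m+2)) S2 γb := fun τ hτ t ht => (hγbc τ hτ t ht).le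
      have hglue : γb 0 = γa S1 := by rw [hγb0, hγaT]
      have hcc := wchain_concat hF (by linarith [hd0 (m+1)] : (0:ℝ) ≤ d (m+1) / 2)
        (by linarith) hS2 hwa hwb hglue (hdprop (m+1))
      refine ⟨S1 + S2, fun u => if u ≤ S1 then γa u else γb (u - S1), by linarith, hcc.mono ?_, ?_, ?_⟩
      · have h1 := hdhalf (m+1)
        have h2 := hd0 (m+1)
        exact max_le (by linarith) (by linarith)
      · simp only [if_pos (by linarith : (0:ℝ) ≤ S1), hγa0]
      · have hcond : ¬ (S1 + S2 ≤ S1) := by linarith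
        simp only [if_neg hcond]
        have harg : S1 + S2 - S1 = S2 := by ring
        rw [harg, hγbT]
  -- iterate the loop to get a long weak chain from x to y
  have hmain : ∀ j : ℕ, j ≤ m → ∃ T' γ, 1 + 2*(j:ℝ) ≤ T' ∧
      WChain F (d (m+1-j)) T' γ ∧ γ 0 = x ∧ γ T' = y := by
    intro j
    induction j with
    | zero =>
      intro _
      refine ⟨T1, γ1, by push_cast; linarith, hw1.mono ?_, hγ10, hγ1T⟩
      simpa using hdmono (m+1)
    | succ j ih =>
      intro hj
      obtain ⟨T', γ, hT'dur, hwγ, hγ0, hγT⟩ := ih (Nat.le_of_succ_le hj)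
      have hjR : (0:ℝ) ≤ (j:ℝ) := Nat.cast_nonneg j
      have hT'1 : 1 ≤ T' := by linarith
      have hidx : m + 1 - j = (m - j) + 1 := by omega
      have hidx2 : m + 1 - (j+1) = m - j := by omega
      rw [hidx] at hwγ
      have hwL' : WChain F (d ((m-j)+1)) S γL := hwL.mono (hdanti (by omega))
      have hcc := wchain_concat hF (by linarith [hd0 (m-j)] : (0:ℝ) ≤ d (m-j) / 2)
        (by linarith) (by linarith : (1:ℝ) ≤ S) hwγ hwL'
        (by rw [hL0, hγT]) (hdprop (m-j))
      refine ⟨T' + S, fun u => if u ≤ T' then γ u else γL (u - T'), ?_, ?_, ?_, ?_⟩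
      · push_cast; linarith
      · rw [hidx2]
        refine hcc.mono (max_le ?_ ?_)
        · linarith [hdhalf (m-j), hd0 (m-j)]
        · linarith [hdhalf (m-j)]
      · simp only [if_pos (by linarith : (0:ℝ) ≤ T'), hγ0]
      · have hcond : ¬ (T' + S ≤ T') := by linarith
        simp only [if_neg hcond]
        have harg : T' + S - T' = S := by ring
        rw [harg, hLS]
  obtain ⟨T', γ, hdur, hwγ, hγ0, hγT⟩ := hmain m le_rfl
  have hw : WChain F δ₁ T' γ := by
    refine hwγ.mono ?_
    have h1 : d (m+1-m) = d 1 := by norm_num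
    rw [h1]
    calc d 1 ≤ d 0 := hdmono 0
      _ = δ₁ := hd00
  have hTT' : T ≤ T' := by linarith
  have hT'0 : 0 < T' := by linarith
  -- key estimate: the curve tracks the flow up to error < ε over times ≤ M
  have hkey : ∀ s t : ℝ, 0 ≤ s → s ≤ M → 0 ≤ t → t + s ≤ T' →
      dist (γ (t + s)) (F s (γ t)) < ε := by
    intro s t hs0 hsM ht0 htT
    refine (wchain_dist hF hη0.le hw hPM s t hs0 hsM ht0 htT).trans_lt ?_
    have hsη : s * η ≤ M * η := mul_le_mul_of_nonneg_right hsM hη0.le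
    have hεη : η * (4*T + 4) = ε := by
      rw [hηdef]; field_simp
    nlinarith [hη0, hε]
  -- build the Conley chain
  set n : ℕ := ⌊T' / T⌋₊ with hndef
  have hn1 : 1 ≤ n := Nat.le_floor (by rw [Nat.cast_one, le_div_iff₀ hT]; linarith)
  have hnR : (1:ℝ) ≤ (n:ℝ) := by exact_mod_cast hn1
  have hnT : (n:ℝ) * T ≤ T' := by
    have h1 : (n:ℝ) ≤ T' / T := Nat.floor_le (by positivity)
    rwa [← le_div_iff₀ hT]
  have hnT' : T' < ((n:ℝ) + 1) * T := by
    have h1 : T' / T < (n:ℝ) + 1 := Nat.lt_floor_add_one (T' / T)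
    rwa [div_lt_iff₀ hT] at h1
  refine ⟨n, fun i => if i < n then γ ((i:ℝ) * T) else y,
    fun i => if i + 1 < n then T else T' - ((n:ℝ) - 1) * T, hn1, ?_, ?_, ?_⟩
  · beta_reduce
    rw [if_pos (show 0 < n from hn1)]
    norm_num [hγ0]
  · simp
  · intro i hi
    beta_reduce
    have hiR : (i:ℝ) ≤ (n:ℝ) - 1 := by
      have : ((i:ℕ):ℝ) + 1 ≤ (n:ℝ) := by exact_mod_cast hi
      linarith
    have hi0 : (0:ℝ) ≤ (i:ℝ) * T := mul_nonneg (Nat.cast_nonneg i) hT.le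
    by_cases hin : i + 1 < n
    · have h1R : ((i:ℝ) + 1) ≤ (n:ℝ) := by exact_mod_cast hin.le
      refine ⟨by rw [if_pos hin], ?_⟩
      rw [if_pos hin, if_pos hi, if_pos hin]
      have hkey' := hkey T ((i:ℝ) * T) hT.le (by rw [hMdef]; linarith)
        hi0 (by nlinarith)
      have harg : ((i:ℝ) + 1) * T = (i:ℝ) * T + T := by ring
      have hcast : (((i+1 : ℕ)):ℝ) * T = (i:ℝ) * T + T := by push_cast; ring
      rw [hcast, dist_comm]
      exact hkey'
    · have hieq : i + 1 = n := by omega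
      have hiR' : (i:ℝ) = (n:ℝ) - 1 := by
        have : ((i:ℕ):ℝ) + 1 = (n:ℝ) := by exact_mod_cast hieq
        linarith
      have hexp : ((n:ℝ) - 1) * T = (n:ℝ) * T - T := by ring
      have hexp2 : ((n:ℝ) + 1) * T = (n:ℝ) * T + T := by ring
      have hsT : T ≤ T' - ((n:ℝ) - 1) * T := by rw [hexp]; linarith
      have hs2T : T' - ((n:ℝ) - 1) * T ≤ 2 * T := by rw [hexp]; linarith
      refine ⟨by rw [if_neg hin]; exact hsT, ?_⟩
      rw [if_neg hin, if_pos hi, if_neg (by omega : ¬ i + 1 < n)]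
      have hkey' := hkey (T' - ((n:ℝ) - 1) * T) ((i:ℝ) * T) (by linarith)
        (by rw [hMdef]; linarith) hi0 (by rw [hiR']; ring_nf; linarith)
      have harg : (i:ℝ) * T + (T' - ((n:ℝ) - 1) * T) = T' := by rw [hiR']; ring
      rw [harg, hγT] at hkey'
      rw [dist_comm]
      exact hkey'
end

section
/- Let F be a semiflow on a compact metric space (X,d). Then every shadow chain-recurrent point is Conley chain-recurrent: R_S ⊆ R_C. -/
open Set Metric Filter

variable {X : Type*} [MetricSpace X]

/-- Auxiliary: a discrete chain with steps of size in `[1/2, 1]` and errors `< δ`. -/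
def GoodChain (F : ℝ → X → X) (δ : ℝ) (N : ℕ) (c : ℕ → X) (t : ℕ → ℝ) (x y : X) : Prop :=
  c 0 = x ∧ c N = y ∧ ∀ i < N, (1/2 ≤ t i ∧ t i ≤ 1) ∧ dist (F (t i) (c i)) (c (i+1)) < δ

lemma key_mod [CompactSpace X] {F : ℝ → X → X} (hF : IsSemiflow F) :
    ∀ ε > (0:ℝ), ∃ δ > (0:ℝ), ∀ a b : X, dist a b < δ →
      ∀ τ ∈ Set.Icc (0:ℝ) 1, dist (F τ a) (F τ b) < ε := by
  intro ε hε
  have hK : IsCompact ((Set.Icc (0:ℝ) 1) ×ˢ (Set.univ : Set X)) :=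
    isCompact_Icc.prod isCompact_univ
  have hcont : ContinuousOn (fun p : ℝ × X => F p.1 p.2) (Set.Icc (0:ℝ) 1 ×ˢ Set.univ) :=
    hF.cont.mono (Set.prod_mono Set.Icc_subset_Ici_self subset_rfl)
  have huc := hK.uniformContinuousOn_of_continuous hcont
  rw [Metric.uniformContinuousOn_iff] at huc
  obtain ⟨δ, hδ, h⟩ := huc ε hε
  refine ⟨δ, hδ, fun a b hab τ hτ => ?_⟩
  have := h (τ, a) ⟨hτ, trivial⟩ (τ, b) ⟨hτ, trivial⟩ ?_
  · exact this
  · rw [Prod.dist_eq]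
    simp only [dist_self]
    exact max_lt hδ hab

lemma shadow_good {F : ℝ → X → X} {δ T : ℝ} {γ : ℝ → X} {x y : X}
    (h : IsShadowChain F δ T γ x y) :
    ∃ N c t, 1 ≤ N ∧ GoodChain F δ N c t x y := by
  obtain ⟨hT, -, h0, hTy, hclose⟩ := h
  have hT0 : (0:ℝ) < T := by linarith
  set N := ⌈T⌉₊ with hN
  have hN1 : 1 ≤ N := Nat.one_le_ceil_iff.mpr hT0
  have hNpos : (0:ℝ) < N := by exact_mod_cast hN1
  set s := T / N with hs
  have hsle : T ≤ (N:ℝ) := Nat.le_ceil T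
  have hslt : (N:ℝ) < 2*T := by
    have := Nat.ceil_lt_add_one (le_of_lt hT0)
    push_cast at this ⊢
    linarith
  have hs1 : s ≤ 1 := by
    rw [hs, div_le_one hNpos]; exact hsle
  have hs2 : 1/2 < s := by
    rw [hs, lt_div_iff₀ hNpos]; linarith
  have hs0 : 0 < s := by linarith
  have hNsT : (N:ℝ) * s = T := by
    rw [hs]; field_simp
  refine ⟨N, fun i => γ (i * s), fun _ => s, hN1, ?_, ?_, ?_⟩
  · simpa using h0
  · simp only [hNsT]; exact hTy
  · intro i hi
    refine ⟨⟨le_of_lt hs2, hs1⟩, ?_⟩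
    have hi' : (i:ℝ) ≤ (N:ℝ) - 1 := by
      have : (i:ℝ) + 1 ≤ N := by exact_mod_cast hi
      linarith
    have h1 : (i:ℝ) * s ∈ Set.Icc 0 (T - s) := by
      constructor
      · positivity
      · nlinarith
    have hc := hclose s ⟨le_of_lt hs0, hs1⟩ ((i:ℝ)*s) h1
    have he : ((i:ℕ)+1 : ℕ) * (s:ℝ) = (i:ℝ)*s + s := by push_cast; ring
    rw [dist_comm]
    simp only [he]
    exact hc

lemma goodChain_trans {F : ℝ → X → X} {δ : ℝ} {N₁ N₂ : ℕ} {c₁ c₂ : ℕ → X}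
    {t₁ t₂ : ℕ → ℝ} {x y z : X}
    (h₁ : GoodChain F δ N₁ c₁ t₁ x y) (h₂ : GoodChain F δ N₂ c₂ t₂ y z) :
    ∃ c t, GoodChain F δ (N₁ + N₂) c t x z := by
  obtain ⟨ha0, ha1, ha⟩ := h₁
  obtain ⟨hb0, hb1, hb⟩ := h₂
  set c : ℕ → X := fun i => if i < N₁ then c₁ i else c₂ (i - N₁) with hc
  set t : ℕ → ℝ := fun i => if i < N₁ then t₁ i else t₂ (i - N₁) with ht
  have hcc : ∀ i ≤ N₁, c i = c₁ i := by
    intro i hi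
    rcases lt_or_eq_of_le hi with h | h
    · simp [hc, h]
    · subst h
      simp only [hc, lt_irrefl, if_false, Nat.sub_self]
      rw [hb0, ha1]
  have hcc2 : ∀ i, N₁ ≤ i → c i = c₂ (i - N₁) := by
    intro i hi
    simp [hc, Nat.not_lt.mpr hi]
  refine ⟨c, t, ?_, ?_, ?_⟩
  · rw [hcc 0 (Nat.zero_le _), ha0]
  · rcases Nat.eq_zero_or_pos N₂ with h | h
    · subst h
      rw [Nat.add_zero, hcc N₁ le_rfl, ha1, ← hb0, hb1]
    · rw [hcc2 (N₁ + N₂) (Nat.le_add_right _ _)]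
      simp only [Nat.add_sub_cancel_left]
      exact hb1
  · intro i hi
    by_cases h : i < N₁
    · have e1 : c i = c₁ i := hcc i (le_of_lt h)
      have e2 : c (i+1) = c₁ (i+1) := hcc (i+1) h
      have e3 : t i = t₁ i := by simp [ht, h]
      rw [e1, e2, e3]
      exact ha i h
    · push_neg at h
      have e1 : c i = c₂ (i - N₁) := hcc2 i h
      have e2 : c (i+1) = c₂ (i - N₁ + 1) := by
        rw [hcc2 (i+1) (by omega)]
        congr 1
        omega
      have e3 : t i = t₂ (i - N₁) := by simp [ht, Nat.not_lt.mpr h]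
      rw [e1, e2, e3]
      exact hb (i - N₁) (by omega)

lemma long_chain {F : ℝ → X → X} {x y : X}
    (hxy : ShadowLe F x y) (hyx : ShadowLe F y x) {δ : ℝ} (hδ : 0 < δ) :
    ∀ m : ℕ, ∃ N c t, m ≤ N ∧ GoodChain F δ N c t x y := by
  intro m
  induction m with
  | zero =>
    obtain ⟨T, γ, h⟩ := hxy δ hδ
    obtain ⟨N, c, t, h1, h2⟩ := shadow_good h
    exact ⟨N, c, t, Nat.zero_le _, h2⟩
  | succ m ih =>
    obtain ⟨N, c, t, hm, hch⟩ := ih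
    obtain ⟨T₂, γ₂, h₂⟩ := hyx δ hδ
    obtain ⟨N₂, c₂, t₂, hN₂, hch₂⟩ := shadow_good h₂
    obtain ⟨T₃, γ₃, h₃⟩ := hxy δ hδ
    obtain ⟨N₃, c₃, t₃, hN₃, hch₃⟩ := shadow_good h₃
    obtain ⟨c', t', h'⟩ := goodChain_trans hch hch₂
    obtain ⟨c'', t'', h''⟩ := goodChain_trans h' hch₃
    exact ⟨N + N₂ + N₃, c'', t'', by omega, h''⟩

lemma iter_mod [CompactSpace X] {F : ℝ → X → X} (hF : IsSemiflow F) :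
    ∀ (n : ℕ), ∀ ε > (0:ℝ), ∃ δ > (0:ℝ), δ ≤ ε ∧
      ∀ (c : ℕ → X) (t : ℕ → ℝ), ∀ m ≤ n,
        (∀ i < m, (0 ≤ t i ∧ t i ≤ 1) ∧ dist (F (t i) (c i)) (c (i+1)) < δ) →
        dist (F (∑ i ∈ Finset.range m, t i) (c 0)) (c m) < ε := by
  intro n
  induction n with
  | zero =>
    intro ε hε
    refine ⟨ε, hε, le_rfl, fun c t m hm _ => ?_⟩
    interval_cases m
    simp [hF.map_zero, hε]
  | succ n ih =>
    intro ε hε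
    obtain ⟨δ₁, hδ₁, hmod⟩ := key_mod hF (ε/2) (by linarith)
    have hε₂ : (0:ℝ) < min δ₁ (ε/2) := lt_min hδ₁ (by linarith)
    obtain ⟨δ, hδ, hδle, hind⟩ := ih (min δ₁ (ε/2)) hε₂
    refine ⟨δ, hδ, ?_, ?_⟩
    · calc δ ≤ min δ₁ (ε/2) := hδle
        _ ≤ ε/2 := min_le_right _ _
        _ ≤ ε := by linarith
    · intro c t m hm hcond
      rcases Nat.lt_succ_iff_lt_or_eq.mp (Nat.lt_succ_of_le hm) with h | h
      · have := hind c t m (Nat.lt_succ_iff.mp h) hcond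
        calc dist (F (∑ i ∈ Finset.range m, t i) (c 0)) (c m) < min δ₁ (ε/2) := this
          _ ≤ ε/2 := min_le_right _ _
          _ < ε := by linarith
      · subst h
        have hprev := hind c t n le_rfl (fun i hi => hcond i (Nat.lt_succ_of_lt hi))
        have hS : (0:ℝ) ≤ ∑ i ∈ Finset.range n, t i :=
          Finset.sum_nonneg fun i hi => (hcond i (Nat.lt_succ_of_lt (Finset.mem_range.mp hi))).1.1
        have htn := hcond n (Nat.lt_succ_self n)
        have hsplit : F (∑ i ∈ Finset.range (n+1), t i) (c 0)
            = F (t n) (F (∑ i ∈ Finset.range n, t i) (c 0)) := by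
          rw [Finset.sum_range_succ, add_comm]
          exact hF.map_add (t n) _ htn.1.1 hS (c 0)
        have h1 : dist (F (t n) (F (∑ i ∈ Finset.range n, t i) (c 0))) (F (t n) (c n)) < ε/2 := by
          apply hmod _ _ (lt_of_lt_of_le hprev (min_le_left _ _)) (t n) ⟨htn.1.1, htn.1.2⟩
        have h2 : dist (F (t n) (c n)) (c (n+1)) < ε/2 := by
          calc dist (F (t n) (c n)) (c (n+1)) < δ := htn.2
            _ ≤ min δ₁ (ε/2) := hδle
            _ ≤ ε/2 := min_le_right _ _
        calc dist (F (∑ i ∈ Finset.range (n+1), t i) (c 0)) (c (n+1))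
            ≤ dist (F (∑ i ∈ Finset.range (n+1), t i) (c 0)) (F (t n) (c n))
              + dist (F (t n) (c n)) (c (n+1)) := dist_triangle _ _ _
          _ < ε/2 + ε/2 := by rw [hsplit]; exact add_lt_add h1 h2
          _ = ε := by ring

lemma conleyChain_cons {F : ℝ → X → X} {ε T s : ℝ} {x z y : X}
    (hs : T ≤ s) (hd : dist (F s x) z < ε) (h : ConleyChain F ε T z y) :
    ConleyChain F ε T x y := by
  obtain ⟨N, c, t, hN, h0, h1, hstep⟩ := h
  refine ⟨N + 1, fun i => if i = 0 then x else c (i - 1),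
    fun i => if i = 0 then s else t (i - 1), by omega, by simp, ?_, ?_⟩
  · simp only [Nat.add_eq_zero, and_false, if_neg, Nat.add_sub_cancel]
    simpa using h1
  · intro i hi
    rcases Nat.eq_zero_or_pos i with h | h
    · subst h
      simp only [if_pos rfl, Nat.zero_add, if_neg (Nat.one_ne_zero)]
      exact ⟨hs, by simpa [h0] using hd⟩
    · have hne : i ≠ 0 := Nat.pos_iff_ne_zero.mp h
      have hne1 : i + 1 ≠ 0 := by omega
      simp only [if_neg hne, if_neg hne1]
      have : i + 1 - 1 = (i - 1) + 1 := by omega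
      rw [this]
      exact hstep (i - 1) (by omega)

lemma chop {F : ℝ → X → X} {ε T δ : ℝ} (k : ℕ) (hk1 : 1 ≤ k) (hT : T ≤ (k:ℝ)/2)
    (hprefix : ∀ (c : ℕ → X) (t : ℕ → ℝ), ∀ m ≤ 2*k,
        (∀ i < m, (0 ≤ t i ∧ t i ≤ 1) ∧ dist (F (t i) (c i)) (c (i+1)) < δ) →
        dist (F (∑ i ∈ Finset.range m, t i) (c 0)) (c m) < ε) :
    ∀ N, k ≤ N → ∀ (x y : X) (c : ℕ → X) (t : ℕ → ℝ),
      GoodChain F δ N c t x y → ConleyChain F ε T x y := by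
  intro N
  induction N using Nat.strong_induction_on with
  | _ N ih =>
    intro hkN x y c t hch
    obtain ⟨h0, h1, hstep⟩ := hch
    have hsumlb : ∀ m : ℕ, m ≤ N → (m:ℝ)/2 ≤ ∑ i ∈ Finset.range m, t i := by
      intro m hm
      have : ∑ i ∈ Finset.range m, (1/2:ℝ) ≤ ∑ i ∈ Finset.range m, t i :=
        Finset.sum_le_sum fun i hi => (hstep i (lt_of_lt_of_le (Finset.mem_range.mp hi) hm)).1.1
      simpa [Finset.sum_const, Finset.card_range, mul_comm, div_eq_mul_inv] using this
    have hcond : ∀ m ≤ N, ∀ i < m, (0 ≤ t i ∧ t i ≤ 1) ∧ dist (F (t i) (c i)) (c (i+1)) < δ := by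
      intro m hm i hi
      have := hstep i (lt_of_lt_of_le hi hm)
      exact ⟨⟨by linarith [this.1.1], this.1.2⟩, this.2⟩
    by_cases h2 : N < 2*k
    · refine ⟨1, fun i => if i = 0 then x else y, fun _ => ∑ i ∈ Finset.range N, t i,
        le_rfl, by simp, by simp, ?_⟩
      intro i hi
      interval_cases i
      constructor
      · have := hsumlb N le_rfl
        have hkN' : (k:ℝ) ≤ N := by exact_mod_cast hkN
        simp only [if_pos rfl]
        linarith
      · have := hprefix c t N (le_of_lt h2) (hcond N le_rfl)
        simp only [if_pos rfl, if_neg Nat.one_ne_zero]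
        rwa [h0, h1] at this
    · push_neg at h2
      have hkN2 : k ≤ N - k := by omega
      have hlt : N - k < N := by omega
      have htail : GoodChain F δ (N - k) (fun i => c (i + k)) (fun i => t (i + k)) (c k) y := by
        refine ⟨?_, ?_, ?_⟩
        · show c (0 + k) = c k
          rw [Nat.zero_add]
        · show c (N - k + k) = y
          rw [Nat.sub_add_cancel (by omega)]
          exact h1
        · intro i hi
          show (1/2 ≤ t (i+k) ∧ t (i+k) ≤ 1) ∧ dist (F (t (i+k)) (c (i+k))) (c (i+1+k)) < δ
          have e : i + 1 + k = i + k + 1 := by omega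
          rw [e]
          exact hstep (i + k) (by omega)
      have hhop : dist (F (∑ i ∈ Finset.range k, t i) x) (c k) < ε := by
        have := hprefix c t k (by omega) (hcond k (by omega))
        rwa [h0] at this
      have hhopT : T ≤ ∑ i ∈ Finset.range k, t i := by
        have := hsumlb k (by omega)
        linarith
      exact conleyChain_cons hhopT hhop (ih (N - k) hlt hkN2 (c k) y _ _ htail)

lemma conley_of_shadow [CompactSpace X] {F : ℝ → X → X} (hF : IsSemiflow F)
    {x y : X} (hxy : ShadowLe F x y) (hyx : ShadowLe F y x) :
    ConleyLe F x y := by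
  intro ε hε T hT
  set k : ℕ := ⌈2*T⌉₊ + 1 with hk
  have hk1 : 1 ≤ k := by omega
  have hkT : T ≤ (k:ℝ)/2 := by
    have h1 : 2*T ≤ (⌈2*T⌉₊ : ℝ) := Nat.le_ceil _
    have h2 : ((⌈2*T⌉₊ : ℕ) : ℝ) ≤ (k:ℝ) := by exact_mod_cast Nat.le_succ _
    linarith
  obtain ⟨δ, hδ, hδε, hprefix⟩ := iter_mod hF (2*k) ε hε
  obtain ⟨N, c, t, hmN, hch⟩ := long_chain hxy hyx hδ k
  exact chop k hk1 hkT hprefix N hmN x y c t hch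

/-- on a compact metric space, `R_S ⊆ R_C`. -/
theorem RS_subset_RC [CompactSpace X] (F : ℝ → X → X) (hF : IsSemiflow F) :
    RS F ⊆ RC F := by
  intro x hx
  rcases hx with h | ⟨y, hxy, hyx⟩
  · exact Or.inl h
  · exact Or.inr ⟨y, conley_of_shadow hF hxy hyx, conley_of_shadow hF hyx hxy⟩
end
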